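/- arXiv:2208.09025 — 5 statements merged into one kernel-verified Lean document; each statement's English description precedes it below -/
import Mathlib

section
/- Let 0 < k < n and let A be a consecutively unimodular k×n matrix over a field 𝕜, with twist τ(A). Then for all a, b ∈ ℤ with residues ā, b̄ ∈ {1,…,n} mod n: τ(A)_a · A_b = det(A_{[a+1,a+k−1]∪{b}}) if ā ≥ b̄, and τ(A)_a · A_b = (−1)^{k−1}·det(A_{[a+1,a+k−1]∪{b}}) if ā < b̄, with the convention that det(A_{[a+1,a+k−1]∪{b}}) := 0 when b is congruent mod n to an element of [a+1, a+k−1]. In particular, the procedure of forming τ(A)^⊤A, multiplying its strictly upper-triangular entries by (−1)^{k−1}, and arranging the results n-periodically produces exactly the frieze with entries F(A)_{a,b} = det(A_{[a+1,a+k−1]∪{b}}) for b ≤ a ≤ b + n − k and 0 otherwise. -/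
open Finset

variable {K : Type*} [Field K]

/-- The residue of `a` mod `n`, as an element of `Fin n` (with `{1, …, n}`
identified order-preservingly with `Fin n` via `r ↦ r - 1`). -/
def resFin (n : ℕ) [NeZero n] (a : ℤ) : Fin n :=
  ⟨((a - 1) % (n : ℤ)).toNat % n, Nat.mod_lt _ (Nat.pos_of_ne_zero (NeZero.ne n))⟩

/-- The determinant of the submatrix of the `k × n` matrix `A` on the columns indexed by
the residues mod `n` of elements of `I`, taken in increasing order of residue
(junk value `0` if the number of distinct residues is not `k`). -/
noncomputable def cdet {k n : ℕ} [NeZero n] (A : Matrix (Fin k) (Fin n) K)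
    (I : Finset ℤ) : K :=
  if h : (I.image (resFin n)).card = k then
    Matrix.det (Matrix.of fun i j : Fin k => A i ((I.image (resFin n)).orderEmbOfFin h j))
  else 0

/-- The dot product of the `a`-th column of `T` with the `b`-th column of `A`
(columns indexed by `ℤ` mod `n`). -/
def dotc {k n : ℕ} [NeZero n] (T A : Matrix (Fin k) (Fin n) K) (a b : ℤ) : K :=
  ∑ i : Fin k, T i (resFin n a) * A i (resFin n b)

/-- A `k × n` matrix is consecutively unimodular if every minor on `k` cyclically
consecutive columns is `1`. -/
def ConsecUnimodular (n : ℕ) [NeZero n] {k : ℕ} (A : Matrix (Fin k) (Fin n) K) : Prop :=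
  ∀ a : ℤ, cdet A (Finset.Icc a (a + k - 1)) = 1

/-- `T` is the (right) twist `τ(A)` of the consecutively unimodular matrix `A`:
`A_a ⬝ τ(A)_b = 1` if `a = b`, and `= 0` if `b < a < b + k`. -/
def IsTwistCU (n : ℕ) [NeZero n] {k : ℕ} (A T : Matrix (Fin k) (Fin n) K) : Prop :=
  ∀ a b : ℤ, (a = b → dotc A T a b = 1) ∧ (b < a → a < b + k → dotc A T a b = 0)

/-- The frieze `F(A)` of a consecutively unimodular `k × n` matrix `A`. -/
noncomputable def FCU (n : ℕ) [NeZero n] {k : ℕ} (A : Matrix (Fin k) (Fin n) K) :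
    ℤ → ℤ → K :=
  fun a b =>
    if b ≤ a ∧ a ≤ b + (n : ℤ) - k then cdet A (Finset.Icc (a + 1) (a + k - 1) ∪ {b})
    else 0


lemma resFin_coe (n : ℕ) [NeZero n] (a : ℤ) (t : ℕ) :
    (resFin n (a + t) : ℕ) = ((resFin n a : ℕ) + t) % n := by
  have hn : (0:ℤ) < n := by exact_mod_cast Nat.pos_of_ne_zero (NeZero.ne n)
  have h2 : (0:ℤ) ≤ (a-1) % n := Int.emod_nonneg _ (by omega)
  have h3 : (a-1) % n < n := Int.emod_lt_of_pos _ hn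
  simp only [resFin]
  have h1 : a + t - 1 = (a - 1) + t := by ring
  have h4 : ((a - 1) % n).toNat % n = ((a - 1) % n).toNat := Nat.mod_eq_of_lt (by omega)
  rw [h1, h4]
  have h7 : ((((a-1)%n).toNat + t) % n : ℕ) < n := Nat.mod_lt _ (Nat.pos_of_ne_zero (NeZero.ne n))
  have h5 : (a - 1 + t) % n = ((((a-1) % n).toNat + t) % n : ℕ) := by
    push_cast
    rw [Int.toNat_of_nonneg h2]
    conv_lhs => rw [Int.add_emod]
    conv_rhs => rw [Int.add_emod, Int.emod_emod_of_dvd _ dvd_rfl]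
  rw [h5, Int.toNat_natCast, Nat.mod_eq_of_lt h7]

/-- sorted position `j`-th element of the residue window. -/
def sF (abar w j : ℕ) : ℕ := if j < w then j else abar + 1 + (j - w)

/-- cyclic index to sorted index. -/
def rmF (m w j : ℕ) : ℕ := if j < m - w then w + j else j - (m - w)

/-- permutation values: cyclic position `i` ↦ position in sorted `S ∪ {x}` where `x` sits at `c`. -/
def pvF (m w c i : ℕ) : ℕ :=
  if i = 0 then c else if rmF m w (i-1) < c then rmF m w (i-1) else rmF m w (i-1) + 1

/-- sorted list of `S ∪ {x}` with `x` inserted at position `c`. -/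
def hFv (abar w c x i : ℕ) : ℕ :=
  if i < c then sF abar w i else if i = c then x else sF abar w (i-1)

lemma res_val (n m : ℕ) [NeZero n] (hn : m + 1 < n) (a : ℤ) (j : ℕ) (hj : j < m) :
    (resFin n (a + 1 + (j:ℤ)) : ℕ)
      = sF (resFin n a : ℕ) ((resFin n a : ℕ) + 1 + m - n)
          (rmF m ((resFin n a : ℕ) + 1 + m - n) j) := by
  have han : (resFin n a : ℕ) < n := (resFin n a).isLt
  set abar := (resFin n a : ℕ) with habar
  set w := abar + 1 + m - n with hw
  have h1 : (resFin n (a + 1 + (j:ℤ)) : ℕ) = (abar + (1+j)) % n := by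
    rw [show a + 1 + (j:ℤ) = a + ((1+j : ℕ) : ℤ) by push_cast; ring, resFin_coe]
  rw [h1]
  rcases Nat.lt_or_ge j (m - w) with h | h
  · rw [Nat.mod_eq_of_lt (by omega)]
    simp only [sF, rmF, if_pos h]
    rw [if_neg (by omega)]
    omega
  · rw [show abar + (1+j) = n + (j - (m - w)) by omega, Nat.add_mod_left,
      Nat.mod_eq_of_lt (by omega)]
    simp only [sF, rmF, if_neg (by omega : ¬ j < m - w)]
    rw [if_pos (by omega)]

noncomputable def permIns (m w c : ℕ) (hc : c ≤ m) : Equiv.Perm (Fin (m+1)) :=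
  Equiv.ofBijective (fun i => ⟨pvF m w c i, by
      have := i.isLt; unfold pvF rmF; split_ifs <;> omega⟩)
    (Finite.injective_iff_bijective.mp (fun i₁ i₂ h => by
      have h' : pvF m w c i₁ = pvF m w c i₂ := congrArg Fin.val h
      have hi1 := i₁.isLt; have hi2 := i₂.isLt
      apply Fin.ext
      unfold pvF rmF at h'; split_ifs at h' <;> omega))

lemma permIns_val (m w c : ℕ) (hc : c ≤ m) (i : Fin (m+1)) :
    ((permIns m w c hc i : Fin (m+1)) : ℕ) = pvF m w c i := rfl

lemma permIns_last (m w : ℕ) (hc : m ≤ m) :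
    permIns m w m hc = (Fin.cycleRange (Fin.last m))⁻¹ * permIns m w 0 (Nat.zero_le m) := by
  apply Equiv.ext
  intro i
  rw [Equiv.Perm.mul_apply, Equiv.Perm.eq_inv_iff_eq]
  have hi := i.isLt
  by_cases h0 : (i : ℕ) = 0
  · have h1 : permIns m w m hc i = Fin.last m := by
      apply Fin.ext; rw [permIns_val]; unfold pvF; rw [if_pos h0]; simp [Fin.val_last]
    have h2 : permIns m w 0 (Nat.zero_le m) i = 0 := by
      apply Fin.ext; rw [permIns_val]; unfold pvF; rw [if_pos h0]; simp
    rw [h1, h2, Fin.cycleRange_self]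
  · have ht : rmF m w ((i:ℕ)-1) < m := by unfold rmF; split_ifs <;> omega
    have h1 : permIns m w m hc i = ⟨rmF m w ((i:ℕ)-1), by omega⟩ := by
      apply Fin.ext; rw [permIns_val]; unfold pvF; rw [if_neg h0, if_pos ht]
    have h2 : permIns m w 0 (Nat.zero_le m) i = ⟨rmF m w ((i:ℕ)-1) + 1, by omega⟩ := by
      apply Fin.ext; rw [permIns_val]; unfold pvF
      rw [if_neg h0, if_neg (by omega)]
    rw [h1, h2, Fin.cycleRange_of_lt (by rw [Fin.lt_def, Fin.val_last]; exact ht)]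
    apply Fin.ext
    rw [Fin.val_add_one_of_lt (by rw [Fin.lt_def, Fin.val_last]; exact ht)]

/-- column selection: `x` followed by the cyclic window after `a`. -/
def gcol (n : ℕ) [NeZero n] {m : ℕ} (a : ℤ) (x : Fin n) : Fin (m+1) → Fin n :=
  Fin.cases x (fun j' : Fin m => resFin n (a + 1 + ((j' : ℕ) : ℤ)))

lemma det_form (n m : ℕ) [NeZero n] (hn : m + 1 < n)
    (A : Matrix (Fin (m+1)) (Fin n) K) (a : ℤ) (x : Fin n) (c : ℕ) (hc : c ≤ m)
    (hcond : (c = (resFin n a : ℕ) + 1 + m - n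
        ∧ (resFin n a : ℕ) + 1 + m - n ≤ (x:ℕ) ∧ (x:ℕ) ≤ (resFin n a : ℕ))
      ∨ (c = m ∧ (resFin n a : ℕ) + 1 + m - n = 0 ∧ (resFin n a : ℕ) + m + 1 ≤ (x:ℕ)))
    (I : Finset ℤ)
    (himg : I.image (resFin n)
      = insert x ((Finset.range m).image fun j : ℕ => resFin n (a + 1 + (j:ℤ)))) :
    Matrix.det (Matrix.of fun i (j : Fin (m+1)) => A i (gcol n a x j))
      = ((Equiv.Perm.sign (permIns m ((resFin n a : ℕ) + 1 + m - n) c hc) : ℤ) : K)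
          * cdet A I := by
  have han : (resFin n a : ℕ) < n := (resFin n a).isLt
  have hxn : (x:ℕ) < n := x.isLt
  set abar := (resFin n a : ℕ) with habar
  set w := abar + 1 + m - n with hw
  set Simg := (Finset.range m).image (fun j : ℕ => resFin n (a + 1 + (j:ℤ))) with hSimg
  -- the explicit sorted embedding
  have hval_lt : ∀ i : ℕ, i ≤ m → hFv abar w c (x:ℕ) i < n := by
    intro i hi
    unfold hFv sF
    split_ifs <;> omega
  set hE : Fin (m+1) → Fin n := fun i => ⟨hFv abar w c (x:ℕ) i, hval_lt i (by omega)⟩ with hhE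
  have hEmono : StrictMono hE := by
    intro i₁ i₂ h12
    rw [Fin.lt_def] at h12 ⊢
    have hi2 := i₂.isLt
    show hFv abar w c (x:ℕ) i₁ < hFv abar w c (x:ℕ) i₂
    unfold hFv sF
    split_ifs <;> omega
  have hmem : ∀ i, hE i ∈ insert x Simg := by
    intro i
    have hi := i.isLt
    by_cases hic : (i:ℕ) = c
    · refine Finset.mem_insert.mpr (Or.inl ?_)
      apply Fin.ext
      show hFv abar w c (x:ℕ) i = (x:ℕ)
      unfold hFv; rw [if_neg (by omega), if_pos hic]
    · set j' : ℕ := if (i:ℕ) < c then (i:ℕ) else (i:ℕ) - 1 with hj'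
      have hd1 : ((i:ℕ) < c ∧ j' = (i:ℕ)) ∨ (¬((i:ℕ) < c) ∧ j' = (i:ℕ) - 1) := by
        rw [hj']; split_ifs with h
        · exact Or.inl ⟨h, rfl⟩
        · exact Or.inr ⟨h, rfl⟩
      have hj'm : j' < m := by omega
      set j : ℕ := if j' < w then (m - w) + j' else j' - w with hj
      have hd2 : (j' < w ∧ j = (m-w)+j') ∨ (¬(j' < w) ∧ j = j' - w) := by
        rw [hj]; split_ifs with h
        · exact Or.inl ⟨h, rfl⟩
        · exact Or.inr ⟨h, rfl⟩
      have hjm : j < m := by omega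
      have hrm : rmF m w j = j' := by unfold rmF; split_ifs <;> omega
      have heq : resFin n (a + 1 + (j:ℤ)) = hE i := by
        apply Fin.ext
        rw [res_val n m hn a j hjm, ← habar, ← hw, hrm]
        show sF abar w j' = hFv abar w c (x:ℕ) i
        unfold hFv sF
        split_ifs <;> omega
      exact Finset.mem_insert.mpr (Or.inr (Finset.mem_image.mpr
        ⟨j, Finset.mem_range.mpr hjm, heq⟩))
  have hScard : Simg.card = m := by
    rw [hSimg, Finset.card_image_of_injOn, Finset.card_range]
    intro j₁ hj₁ j₂ hj₂ hres
    simp only [Finset.mem_coe, Finset.mem_range] at hj₁ hj₂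
    have h2 := congrArg Fin.val hres
    rw [res_val n m hn a j₁ hj₁, res_val n m hn a j₂ hj₂] at h2
    unfold sF rmF at h2
    split_ifs at h2 <;> omega
  have hxS : x ∉ Simg := by
    intro hx
    obtain ⟨j, hj, hjx⟩ := Finset.mem_image.mp hx
    rw [Finset.mem_range] at hj
    have h2 := congrArg Fin.val hjx
    rw [res_val n m hn a j hj] at h2
    unfold sF rmF at h2
    split_ifs at h2 <;> omega
  have hcard : (insert x Simg).card = m + 1 := by
    rw [Finset.card_insert_of_notMem hxS, hScard]
  have hIcard : (I.image (resFin n)).card = m + 1 := by rw [himg]; exact hcard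
  rw [cdet, dif_pos hIcard]
  have hEq : hE = ⇑((I.image (resFin n)).orderEmbOfFin hIcard) :=
    Finset.orderEmbOfFin_unique hIcard (fun i => himg ▸ hmem i) hEmono
  set π := permIns m w c hc with hπ
  have hgE : ∀ j : Fin (m+1), gcol n a x j = hE (π j) := by
    intro j
    apply Fin.ext
    have hval : (hE (π j) : ℕ) = hFv abar w c (x:ℕ) (pvF m w c (j : ℕ)) := rfl
    rw [hval]
    induction j using Fin.cases with
    | zero =>
      simp [gcol, pvF, hFv]
    | succ j' =>
      simp only [gcol, Fin.cases_succ, Fin.val_succ]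
      rw [res_val n m hn a (j' : ℕ) j'.isLt, ← habar, ← hw]
      have hj's := j'.isLt
      rw [show pvF m w c ((j':ℕ)+1)
          = (if rmF m w (j':ℕ) < c then rmF m w (j':ℕ) else rmF m w (j':ℕ)+1) from by
        unfold pvF; rw [if_neg (by omega : ¬((j':ℕ)+1 = 0))]; norm_num]
      set t := rmF m w (j':ℕ) with ht
      by_cases htc : t < c
      · rw [if_pos htc]; unfold hFv; rw [if_pos htc]
      · rw [if_neg htc]; unfold hFv
        rw [if_neg (by omega), if_neg (by omega)]
        norm_num
  have hsub : (Matrix.of fun i (j : Fin (m+1)) => A i (gcol n a x j))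
      = (Matrix.of fun i (j : Fin (m+1)) => A i (hE j)).submatrix id π := by
    ext i j
    simp [Matrix.submatrix, hgE j]
  rw [hsub, Matrix.det_permute' π, ← hEq]

lemma engine (n m : ℕ) [NeZero n] (hn : m + 1 < n)
    (A T : Matrix (Fin (m+1)) (Fin n) K)
    (hA : ConsecUnimodular n A) (hT : IsTwistCU n A T)
    (a b : ℤ) (c : ℕ) (hc : c ≤ m)
    (hcond : (c = (resFin n a : ℕ) + 1 + m - n
        ∧ (resFin n a : ℕ) + 1 + m - n ≤ (resFin n b : ℕ)
        ∧ (resFin n b : ℕ) ≤ (resFin n a : ℕ))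
      ∨ (c = m ∧ (resFin n a : ℕ) + 1 + m - n = 0
        ∧ (resFin n a : ℕ) + m + 1 ≤ (resFin n b : ℕ))) :
    dotc T A a b
      = (-1:K)^c * (-1:K)^((resFin n a : ℕ) + 1 + m - n)
          * cdet A (Finset.Icc (a+1) (a+(m:ℤ)) ∪ {b}) := by
  have han : (resFin n a : ℕ) < n := (resFin n a).isLt
  set abar := (resFin n a : ℕ) with habar
  set w := abar + 1 + m - n with hw
  have hwm : w ≤ m := by omega
  -- image identities
  have hIccEq : Finset.Icc (a+1) (a+(m:ℤ)) = (Finset.range m).image (fun j : ℕ => a+1+(j:ℤ)) := by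
    ext t
    simp only [Finset.mem_Icc, Finset.mem_image, Finset.mem_range]
    constructor
    · intro ht
      exact ⟨(t - a - 1).toNat, by omega, by omega⟩
    · rintro ⟨j, hj, rfl⟩
      omega
  have hIccImg : (Finset.Icc (a+1) (a+(m:ℤ))).image (resFin n)
      = (Finset.range m).image (fun j : ℕ => resFin n (a+1+(j:ℤ))) := by
    rw [hIccEq, Finset.image_image]; rfl
  have himg_a : (Finset.Icc a (a+(m:ℤ))).image (resFin n)
      = insert (resFin n a) ((Finset.range m).image (fun j : ℕ => resFin n (a+1+(j:ℤ)))) := by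
    have h1 : Finset.Icc a (a+(m:ℤ)) = insert a (Finset.Icc (a+1) (a+(m:ℤ))) := by
      ext t; simp only [Finset.mem_Icc, Finset.mem_insert]; omega
    rw [h1, Finset.image_insert, hIccImg]
  have himg_b : ((Finset.Icc (a+1) (a+(m:ℤ))) ∪ {b}).image (resFin n)
      = insert (resFin n b) ((Finset.range m).image (fun j : ℕ => resFin n (a+1+(j:ℤ)))) := by
    rw [Finset.image_union, hIccImg, Finset.image_singleton, Finset.union_comm,
      ← Finset.insert_eq]
  have hA1 : cdet A (Finset.Icc a (a + (m:ℤ))) = 1 := by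
    have h := hA a
    rwa [show a + ((m+1:ℕ):ℤ) - 1 = a + (m:ℤ) by push_cast; ring] at h
  -- the cyclic matrix
  set M : Matrix (Fin (m+1)) (Fin (m+1)) K
    := Matrix.of fun i (j : Fin (m+1)) => A i (gcol n a (resFin n a) j) with hM
  have hdetM : M.det = ((Equiv.Perm.sign (permIns m w w hwm) : ℤ) : K) := by
    rw [hM, det_form n m hn A a (resFin n a) w hwm (Or.inl ⟨rfl, by omega, le_rfl⟩)
      (Finset.Icc a (a+(m:ℤ))) himg_a, hA1, mul_one]
  have hεa1 : ((Equiv.Perm.sign (permIns m w w hwm) : ℤ) : K) = 1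
      ∨ ((Equiv.Perm.sign (permIns m w w hwm) : ℤ) : K) = -1 := by
    rcases Int.units_eq_one_or (Equiv.Perm.sign (permIns m w w hwm)) with h | h <;>
      rw [h] <;> norm_num
  have hMunit : IsUnit M.det := by
    rw [hdetM]; rcases hεa1 with h | h <;> rw [h] <;> simp
  set v : Fin (m+1) → K := fun i => T i (resFin n a) with hv
  set wb : Fin (m+1) → K := fun i => A i (resFin n b) with hwb
  have hvM : Matrix.vecMul v M = Pi.single 0 1 := by
    funext j
    induction j using Fin.cases with
    | zero =>
      have h1 : Matrix.vecMul v M 0 = ∑ i, T i (resFin n a) * A i (resFin n a) := by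
        simp [Matrix.vecMul, dotProduct, hM, hv, gcol]
      rw [h1, Pi.single_eq_same]
      calc ∑ i, T i (resFin n a) * A i (resFin n a)
          = dotc A T a a := Finset.sum_congr rfl fun i _ => mul_comm _ _
        _ = 1 := (hT a a).1 rfl
    | succ j' =>
      have h1 : Matrix.vecMul v M j'.succ
          = ∑ i, T i (resFin n a) * A i (resFin n (a + 1 + ((j':ℕ):ℤ))) := by
        simp [Matrix.vecMul, dotProduct, hM, hv, gcol]
      rw [h1, Pi.single_eq_of_ne (Fin.succ_ne_zero j')]
      have hj' := j'.isLt
      calc ∑ i, T i (resFin n a) * A i (resFin n (a + 1 + ((j':ℕ):ℤ)))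
          = dotc A T (a + 1 + ((j':ℕ):ℤ)) a := Finset.sum_congr rfl fun i _ => mul_comm _ _
        _ = 0 := (hT (a + 1 + ((j':ℕ):ℤ)) a).2 (by omega) (by push_cast; omega)
  have hchain : dotc T A a b
      = ((Equiv.Perm.sign (permIns m w w hwm) : ℤ) : K) * (M.updateCol 0 wb).det := by
    calc dotc T A a b = dotProduct v wb := rfl
      _ = dotProduct v (M.mulVec (M⁻¹.mulVec wb)) := by
          rw [Matrix.mulVec_mulVec, Matrix.mul_nonsing_inv M hMunit, Matrix.one_mulVec]
      _ = dotProduct (Matrix.vecMul v M) (M⁻¹.mulVec wb) :=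
          Matrix.dotProduct_mulVec v M _
      _ = (M⁻¹.mulVec wb) 0 := by rw [hvM, single_dotProduct, one_mul]
      _ = Ring.inverse M.det * (M.adjugate.mulVec wb) 0 := by
          rw [Matrix.inv_def, Matrix.smul_mulVec]; rfl
      _ = Ring.inverse M.det * (M.updateCol 0 wb).det := by
          rw [← Matrix.cramer_eq_adjugate_mulVec, Matrix.cramer_apply]
      _ = ((Equiv.Perm.sign (permIns m w w hwm) : ℤ) : K) * (M.updateCol 0 wb).det := by
          rw [hdetM]
          congr 1
          rcases hεa1 with h | h <;> rw [h] <;> norm_num [Ring.inverse_eq_inv]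
  have hupd : M.updateCol 0 wb
      = Matrix.of fun i (j : Fin (m+1)) => A i (gcol n a (resFin n b) j) := by
    ext i j
    induction j using Fin.cases with
    | zero => simp [Matrix.updateCol_apply, hwb, gcol]
    | succ j' => simp [Matrix.updateCol_apply, Fin.succ_ne_zero, hM, gcol]
  have hdetB : (M.updateCol 0 wb).det
      = ((Equiv.Perm.sign (permIns m w c hc) : ℤ) : K)
          * cdet A (Finset.Icc (a+1) (a+(m:ℤ)) ∪ {b}) := by
    rw [hupd]
    exact det_form n m hn A a (resFin n b) c hc hcond _ himg_b
  rw [hchain, hdetB]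
  rcases hcond with ⟨h1, h2, h3⟩ | ⟨h1, h2, h3⟩
  · -- c = w
    subst h1
    rw [show permIns m w w hc = permIns m w w hwm from rfl]
    have hpow : ((-1:K))^w * (-1:K)^w = 1 := by
      rw [← pow_add]; exact Even.neg_one_pow ⟨w, rfl⟩
    rw [← mul_assoc, hpow]
    rcases hεa1 with h | h <;> rw [h] <;> ring
  · -- c = m, w = 0
    subst h1
    have he0 : permIns c w 0 (Nat.zero_le c) = permIns c w w hwm := by
      apply Equiv.ext; intro i; apply Fin.ext
      show pvF c w 0 (i:ℕ) = pvF c w w (i:ℕ)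
      rw [h2]
    have hinv : (((-1 : ℤˣ))^c)⁻¹ = ((-1:ℤˣ))^c := by
      rw [← inv_pow, inv_neg, inv_one]
    rw [permIns_last c w hc, he0, map_mul, map_inv, Fin.sign_cycleRange, Fin.val_last, hinv]
    have hw0 : ((-1:K))^w = 1 := by rw [h2]; norm_num
    simp only [Units.val_mul, Units.val_pow_eq_pow_val, Units.val_neg, Units.val_one,
      Int.cast_mul, Int.cast_pow, Int.cast_neg, Int.cast_one]
    rw [hw0]
    rcases hεa1 with h | h <;> rw [h] <;> ring

lemma himgB (n m : ℕ) [NeZero n] (a b : ℤ) :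
    ((Finset.Icc (a+1) (a+(m:ℤ))) ∪ {b}).image (resFin n)
      = insert (resFin n b) ((Finset.range m).image (fun j : ℕ => resFin n (a+1+(j:ℤ)))) := by
  have hIccEq : Finset.Icc (a+1) (a+(m:ℤ)) = (Finset.range m).image (fun j : ℕ => a+1+(j:ℤ)) := by
    ext t
    simp only [Finset.mem_Icc, Finset.mem_image, Finset.mem_range]
    constructor
    · intro ht
      exact ⟨(t - a - 1).toNat, by omega, by omega⟩
    · rintro ⟨j, hj, rfl⟩
      omega
  have hIccImg : (Finset.Icc (a+1) (a+(m:ℤ))).image (resFin n)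
      = (Finset.range m).image (fun j : ℕ => resFin n (a+1+(j:ℤ))) := by
    rw [hIccEq, Finset.image_image]; rfl
  rw [Finset.image_union, hIccImg, Finset.image_singleton, Finset.union_comm,
    ← Finset.insert_eq]


/-- **The twist computes the frieze `F(A)`.** For a consecutively unimodular `k × n`
matrix `A` with twist `T = τ(A)`: `τ(A)_a ⬝ A_b` equals `det(A_{[a+1,a+k-1] ∪ {b}})`
when `ā ≥ b̄`, and `(-1)^(k-1)` times it when `ā < b̄` (with the convention that the
determinant is `0` when `b` is congruent mod `n` to an element of `[a+1, a+k-1]`).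
In particular, multiplying the strictly upper-triangular entries of `τ(A)ᵀ A` by
`(-1)^(k-1)` and arranging the entries `n`-periodically produces exactly the frieze
with entries `F(A)_{a,b} = det(A_{[a+1,a+k-1] ∪ {b}})` for `b ≤ a ≤ b + n - k`
and `0` otherwise. -/
theorem twist_dot_eq_det (n k : ℕ) [NeZero n] (hk : 0 < k) (hkn : k < n)
    (A : Matrix (Fin k) (Fin n) K) (hA : ConsecUnimodular n A)
    (T : Matrix (Fin k) (Fin n) K) (hT : IsTwistCU n A T) :
    (∀ a b : ℤ,
      (resFin n b ≤ resFin n a →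
        dotc T A a b = cdet A (Finset.Icc (a + 1) (a + k - 1) ∪ {b})) ∧
      (resFin n a < resFin n b →
        dotc T A a b = (-1 : K) ^ (k - 1) * cdet A (Finset.Icc (a + 1) (a + k - 1) ∪ {b}))) ∧
    (∀ a b : ℤ,
      (if b ≤ a ∧ a ≤ b + (n : ℤ) - k then
        if resFin n b ≤ resFin n a then dotc T A a b else (-1 : K) ^ (k - 1) * dotc T A a b
       else 0) = FCU n A a b) := by
  obtain ⟨m, rfl⟩ : ∃ m, k = m + 1 := ⟨k - 1, by omega⟩
  have hn : m + 1 < n := hkn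
  have part1 : ∀ a b : ℤ,
      (resFin n b ≤ resFin n a →
        dotc T A a b = cdet A (Finset.Icc (a + 1) (a + ((m+1:ℕ):ℤ) - 1) ∪ {b})) ∧
      (resFin n a < resFin n b →
        dotc T A a b
          = (-1 : K) ^ ((m+1) - 1) * cdet A (Finset.Icc (a + 1) (a + ((m+1:ℕ):ℤ) - 1) ∪ {b})) := by
    intro a b
    have han : (resFin n a : ℕ) < n := (resFin n a).isLt
    have hbn : (resFin n b : ℕ) < n := (resFin n b).isLt
    have hU : Finset.Icc (a+1) (a + ((m+1:ℕ):ℤ) - 1) ∪ {b}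
        = Finset.Icc (a+1) (a+(m:ℤ)) ∪ {b} := by
      rw [show (a + ((m+1:ℕ):ℤ) - 1) = a + (m:ℤ) by push_cast; ring]
    by_cases hmem : ∃ j, j < m ∧ resFin n (a+1+(j:ℤ)) = resFin n b
    · -- degenerate case : b falls inside the window
      obtain ⟨j, hjm, hjb⟩ := hmem
      have hdot0 : dotc T A a b = 0 := by
        have heq : dotc T A a b = dotc A T (a+1+(j:ℤ)) a := by
          unfold dotc
          rw [← hjb]
          exact Finset.sum_congr rfl fun i _ => mul_comm _ _
        rw [heq]
        exact (hT (a+1+(j:ℤ)) a).2 (by omega) (by push_cast; omega)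
      have hcdet0 : cdet A (Finset.Icc (a+1) (a+(m:ℤ)) ∪ {b}) = 0 := by
        have hin : resFin n b
            ∈ (Finset.range m).image (fun j : ℕ => resFin n (a+1+(j:ℤ))) :=
          Finset.mem_image.mpr ⟨j, Finset.mem_range.mpr hjm, hjb⟩
        have hle : ((Finset.range m).image (fun j : ℕ => resFin n (a+1+(j:ℤ)))).card ≤ m :=
          Finset.card_image_le.trans (Finset.card_range m).le
        rw [cdet]
        rw [dif_neg]
        rw [himgB n m a b, Finset.insert_eq_self.mpr hin]
        omega
      refine ⟨fun _ => ?_, fun _ => ?_⟩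
      · rw [hdot0, hU, hcdet0]
      · rw [hdot0, hU, hcdet0, mul_zero]
    · -- nondegenerate case
      push_neg at hmem
      have harith : ¬((resFin n b : ℕ) < (resFin n a : ℕ) + 1 + m - n
          ∨ ((resFin n a : ℕ) + 1 ≤ (resFin n b : ℕ)
              ∧ (resFin n b : ℕ) + ((resFin n a : ℕ) + 1 + m - n)
                ≤ (resFin n a : ℕ) + m)) := by
        intro hcon
        set j' : ℕ := if (resFin n b : ℕ) < (resFin n a : ℕ) + 1 + m - n
          then (resFin n b : ℕ)
          else (resFin n b : ℕ) - (resFin n a : ℕ) - 1 + ((resFin n a : ℕ) + 1 + m - n)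
          with hj'
        have hd1 : ((resFin n b : ℕ) < (resFin n a : ℕ) + 1 + m - n ∧ j' = (resFin n b : ℕ))
            ∨ (¬((resFin n b : ℕ) < (resFin n a : ℕ) + 1 + m - n)
              ∧ j' = (resFin n b : ℕ) - (resFin n a : ℕ) - 1
                  + ((resFin n a : ℕ) + 1 + m - n)) := by
          rw [hj']; split_ifs with h
          · exact Or.inl ⟨h, rfl⟩
          · exact Or.inr ⟨h, rfl⟩
        have hj'm : j' < m := by omega
        set j : ℕ := if j' < (resFin n a : ℕ) + 1 + m - n
          then (m - ((resFin n a : ℕ) + 1 + m - n)) + j'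
          else j' - ((resFin n a : ℕ) + 1 + m - n) with hj
        have hd2 : (j' < (resFin n a : ℕ) + 1 + m - n
              ∧ j = (m - ((resFin n a : ℕ) + 1 + m - n)) + j')
            ∨ (¬(j' < (resFin n a : ℕ) + 1 + m - n)
              ∧ j = j' - ((resFin n a : ℕ) + 1 + m - n)) := by
          rw [hj]; split_ifs with h
          · exact Or.inl ⟨h, rfl⟩
          · exact Or.inr ⟨h, rfl⟩
        have hjm : j < m := by omega
        have hrm : rmF m ((resFin n a : ℕ) + 1 + m - n) j = j' := by
          unfold rmF; split_ifs <;> omega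
        apply hmem j hjm
        apply Fin.ext
        rw [res_val n m hn a j hjm, hrm]
        show sF (resFin n a : ℕ) ((resFin n a : ℕ) + 1 + m - n) j' = (resFin n b : ℕ)
        unfold sF
        split_ifs <;> omega
      constructor
      · intro hle
        have hle' : (resFin n b : ℕ) ≤ (resFin n a : ℕ) := hle
        have hres := engine n m hn A T hA hT a b ((resFin n a : ℕ) + 1 + m - n) (by omega)
          (Or.inl ⟨rfl, by omega, hle'⟩)
        rw [hU, hres]
        have hpow : ((-1:K))^((resFin n a : ℕ) + 1 + m - n)
            * (-1:K)^((resFin n a : ℕ) + 1 + m - n) = 1 := by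
          rw [← pow_add]; exact Even.neg_one_pow ⟨_, rfl⟩
        rw [hpow, one_mul]
      · intro hlt
        have hlt' : (resFin n a : ℕ) < (resFin n b : ℕ) := hlt
        have hw0 : (resFin n a : ℕ) + 1 + m - n = 0 := by omega
        have hbig : (resFin n a : ℕ) + m + 1 ≤ (resFin n b : ℕ) := by omega
        have hres := engine n m hn A T hA hT a b m le_rfl (Or.inr ⟨rfl, hw0, hbig⟩)
        rw [hU, hres, hw0]
        norm_num
  refine ⟨part1, ?_⟩
  intro a b
  by_cases hP : b ≤ a ∧ a ≤ b + (n : ℤ) - ((m+1:ℕ):ℤ)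
  · rw [FCU, if_pos hP, if_pos hP]
    by_cases hQ : resFin n b ≤ resFin n a
    · rw [if_pos hQ]
      exact (part1 a b).1 hQ
    · rw [if_neg hQ, (part1 a b).2 (lt_of_not_ge hQ), ← mul_assoc, ← mul_pow]
      norm_num
  · rw [FCU, if_neg hP, if_neg hP]
end

section
/- Let 0 < k < n and let A be a consecutively unimodular k×n matrix over a field 𝕜. Then the ℤ×ℤ matrix F(A), with entries F(A)_{a,b} := det(A_{[a+1,a+k−1]∪{b}}) if b ≤ a ≤ b + n − k and F(A)_{a,b} := 0 otherwise, is an SL(k)-frieze of height n − k. -/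
open Finset

variable {K : Type*} [Field K]

/-- The determinant of the square submatrix of the `ℤ×ℤ` matrix `C` with rows indexed
by `I` and columns by `J`, each taken in increasing order (junk value `0` if the
cardinalities differ). -/
noncomputable def minor (C : ℤ → ℤ → K) (I J : Finset ℤ) : K :=
  if h : J.card = I.card then
    Matrix.det (Matrix.of fun i j : Fin I.card =>
      C (I.orderEmbOfFin rfl i) (J.orderEmbOfFin h j))
  else 0

/-- A prefrieze of height `h`: `C a a = 1` and `C (a+h) a = 1` for all `a`, and
`C a b = 0` whenever `a < b` or `a > b + h`. -/
def IsPrefriezeH (h : ℕ) (C : ℤ → ℤ → K) : Prop :=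
  (∀ a : ℤ, C a a = 1) ∧ (∀ a : ℤ, C (a + h) a = 1) ∧
  (∀ a b : ℤ, a < b ∨ b + h < a → C a b = 0)

/-- An `SL(k)`-frieze of height `h`. -/
def IsSLFrieze (k h : ℕ) (C : ℤ → ℤ → K) : Prop :=
  IsPrefriezeH h C ∧
  (∀ a b : ℤ, b ≤ a → a ≤ b + h →
    minor C (Finset.Icc a (a + k - 1)) (Finset.Icc b (b + k - 1)) = 1) ∧
  (∀ a b : ℤ, b < a → a < b + h →
    minor C (Finset.Icc a (a + k)) (Finset.Icc b (b + k)) = 0)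

namespace FP

noncomputable def sg (z : ℤ) : K := (((Int.negOnePow z) : ℤˣ) : ℤ)

lemma sg_add (x y : ℤ) : (sg (x + y) : K) = sg x * sg y := by
  simp [sg, Int.negOnePow_add]

lemma sg_even {x : ℤ} (h : Even x) : (sg x : K) = 1 := by
  simp [sg, Int.negOnePow_even _ h]

lemma sg_mul_self (x : ℤ) : (sg x : K) * sg x = 1 := by
  rw [← sg_add]; exact sg_even ⟨x, rfl⟩

lemma sg_sub_even {x y : ℤ} (h : Even (x - y)) : (sg x : K) = sg y := by
  have hx : x = y + (x - y) := by ring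
  rw [hx, sg_add, sg_even h, mul_one]

lemma sg_natpow (c : ℕ) : ((-1 : K) ^ c) = sg (c : ℤ) := by
  induction c with
  | zero => simp [sg]
  | succ m ih =>
    rw [pow_succ, ih, Nat.cast_succ, sg_add]
    simp [sg, Int.negOnePow_one]

variable (n : ℕ) [NeZero n]

lemma npos : 0 < n := Nat.pos_of_ne_zero (NeZero.ne n)

lemma resFin_coe (a : ℤ) : ((resFin n a : ℕ) : ℤ) = (a - 1) % n := by
  have hn : (0:ℤ) < n := by exact_mod_cast npos n
  have h0 : (0:ℤ) ≤ (a-1) % n := Int.emod_nonneg _ hn.ne'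
  have h1 : (a-1) % n < n := Int.emod_lt_of_pos _ hn
  have h2 : (((a - 1) % (n : ℤ)).toNat) < n := by omega
  show (((((a - 1) % (n : ℤ)).toNat % n : ℕ)) : ℤ) = (a - 1) % n
  rw [Nat.mod_eq_of_lt h2]; omega

lemma resFin_eq_iff (a b : ℤ) : resFin n a = resFin n b ↔ (n:ℤ) ∣ (a - b) := by
  rw [Fin.ext_iff, ← Nat.cast_inj (R := ℤ), resFin_coe, resFin_coe]
  constructor
  · intro h
    have : (a - 1) ≡ (b - 1) [ZMOD (n:ℤ)] := h
    have := Int.ModEq.dvd this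
    have h2 : (b - 1) - (a - 1) = -(a - b) := by ring
    rw [h2, dvd_neg] at this
    exact this
  · intro h
    have : (a - 1) ≡ (b - 1) [ZMOD (n:ℤ)] := by
      rw [Int.modEq_iff_dvd]
      have h2 : (b - 1) - (a - 1) = -(a - b) := by ring
      rw [h2]; exact dvd_neg.mpr h
    exact this

lemma resFin_val_eq (x Q : ℤ) (h1 : (n:ℤ)*Q ≤ x - 1) (h2 : x - 1 < n*(Q+1)) :
    ((resFin n x : ℕ) : ℤ) = x - 1 - n*Q := by
  rw [resFin_coe]
  have h3 : x - 1 = (x - 1 - n*Q) + n*Q := by ring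
  rw [h3, Int.add_mul_emod_self_left, Int.emod_eq_of_lt (by omega) (by nlinarith)]
  ring

lemma ediv_eq (y Q : ℤ) (h1 : (n:ℤ)*Q ≤ y) (h2 : y < n*(Q+1)) : y / (n:ℤ) = Q := by
  have h3 : y = (y - n*Q) + n*Q := by ring
  rw [h3, Int.add_mul_ediv_left _ _ (by exact_mod_cast (npos n).ne' : (n:ℤ) ≠ 0),
    Int.ediv_eq_zero_of_lt (by omega) (by nlinarith), zero_add]

section Core

variable (k : ℕ) (A : Matrix (Fin k) (Fin n) K)

/-- column indices for the matrix `M i j`: `j` first, then `i+1, …, i+k-1`. -/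
def colfun (i j : ℤ) (s : Fin k) : ℤ := if (s : ℕ) = 0 then j else i + (s : ℕ)

/-- `M i j = det(A_{res j}, A_{res (i+1)}, …, A_{res (i+k-1)})`. -/
noncomputable def Mdet (i j : ℤ) : K :=
  Matrix.det (Matrix.of fun p s : Fin k => A p (resFin n (colfun k i j s)))

lemma Mdet_zero (i j : ℤ) (s : Fin k) (hs : (s:ℕ) ≠ 0)
    (h : resFin n (colfun k i j s) = resFin n j) : Mdet n k A i j = 0 := by
  have h0 : 0 < k := by
    rcases k with _ | k
    · exact absurd s.isLt (by omega)
    · omega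
  apply Matrix.det_zero_of_column_eq (i := (⟨0, h0⟩ : Fin k)) (j := s)
  · intro hc; exact hs (by rw [← hc])
  · intro p
    show A p (resFin n (colfun k i j ⟨0, h0⟩)) = A p (resFin n (colfun k i j s))
    have e0 : colfun k i j ⟨0, h0⟩ = j := by simp [colfun]
    rw [e0, ← h]

variable {k}

/-- cofactors along the first column. -/
noncomputable def cof (i : ℤ) (p : Fin k) : K :=
  Matrix.det ((Matrix.of fun p' s : Fin k => A p' (resFin n (colfun k i i s))).updateCol
    ⟨0, p.pos⟩ (fun q => if p = q then 1 else 0))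

lemma det_updateCol_sum'' (B : Matrix (Fin k) (Fin k) K) (c0 : Fin k)
    (t : Finset (Fin k)) (c : Fin k → K) (e : Fin k → Fin k → K) :
    (B.updateCol c0 (∑ p ∈ t, c p • e p)).det
      = ∑ p ∈ t, c p * (B.updateCol c0 (e p)).det := by
  classical
  induction t using Finset.induction with
  | empty =>
    simp only [Finset.sum_empty]
    exact Matrix.det_eq_zero_of_column_eq_zero c0 (fun i => by simp)
  | insert _ _ hx ih =>
    rename_i x t'
    rw [Finset.sum_insert hx, Finset.sum_insert hx, Matrix.det_updateCol_add,
      Matrix.det_updateCol_smul, ← ih]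

lemma Mdet_eq_sum (hk : 0 < k) (i j : ℤ) :
    Mdet n k A i j = ∑ p : Fin k, A p (resFin n j) * cof n A i p := by
  classical
  have hMeq : (Matrix.of fun p s : Fin k => A p (resFin n (colfun k i j s)))
      = (Matrix.of fun p' s : Fin k => A p' (resFin n (colfun k i i s))).updateCol
        ⟨0, hk⟩ (fun p => A p (resFin n j)) := by
    ext p s
    rw [Matrix.updateCol_apply]
    by_cases hs : s = ⟨0, hk⟩
    · subst hs; simp [colfun]
    · have : (s:ℕ) ≠ 0 := fun hc => hs (Fin.ext hc)
      simp [colfun, this, hs]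
  have hv : (fun p => A p (resFin n j))
      = ∑ p : Fin k, (A p (resFin n j)) • fun q => if p = q then (1:K) else 0 :=
    pi_eq_sum_univ _
  rw [Mdet, hMeq, hv, det_updateCol_sum'']
  refine Finset.sum_congr rfl fun p _ => ?_
  rw [cof]

end Core

section Arith

variable (k : ℕ)

/-- `⌊(j-1)/n⌋`. -/
def qf (j : ℤ) : ℤ := (j - 1) / n

/-- `∑_{y=i}^{i+k-2} ⌊y/n⌋`. -/
def Sf (i : ℤ) : ℤ := ∑ r ∈ Finset.range (k - 1), (i + (r:ℕ)) / n

/-- the wrap count. -/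
def mf (i j : ℤ) : ℕ :=
  ((Finset.range (k - 1)).filter fun r : ℕ => (n:ℤ) * (qf n j + 1) ≤ i + (r:ℕ)).card

noncomputable def alf (i : ℤ) : K := sg (((k:ℤ) - 1) * Sf n k i)

noncomputable def bef (j : ℤ) : K := sg (((k:ℤ) - 1) * qf n j)

lemma qf_spec (j : ℤ) : (n:ℤ) * qf n j ≤ j - 1 ∧ j - 1 < n * (qf n j + 1) := by
  have hn : (0:ℤ) < n := by exact_mod_cast npos n
  have h := Int.emod_add_mul_ediv (j-1) (n:ℤ)
  have h0 : 0 ≤ (j-1) % (n:ℤ) := Int.emod_nonneg _ hn.ne'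
  have h1 : (j-1) % (n:ℤ) < n := Int.emod_lt_of_pos _ hn
  have h2 : (n:ℤ) * (qf n j + 1) = n * qf n j + n := by ring
  have h3 : (n:ℤ) * qf n j = n * ((j-1)/n) := rfl
  constructor <;> linarith

lemma mf_closed (i j : ℤ) :
    ((mf n k i j : ℤ)) = (k:ℤ) - 1 - min ((k:ℤ) - 1) (max 0 ((n:ℤ)*(qf n j + 1) - i)) := by
  set N := (n:ℤ) * (qf n j + 1) with hN
  have : ((Finset.range (k - 1)).filter fun r : ℕ => N ≤ i + (r:ℕ))
      = Finset.Ico (min (k-1) (N - i).toNat) (k - 1) := by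
    ext r
    simp only [Finset.mem_filter, Finset.mem_range, Finset.mem_Ico]
    omega
  rw [mf, ← hN, this, Nat.card_Ico]
  omega

lemma mf_le (i j : ℤ) : mf n k i j ≤ k - 1 := by
  have := mf_closed n k i j
  omega

/-- In the band, `m = S i - (k-1) q j`. -/
lemma mf_eq_S (hk : 0 < k) (i j : ℤ) (hji : j ≤ i) (hin : i ≤ j + (n:ℤ) - k) :
    (mf n k i j : ℤ) = Sf n k i - ((k:ℤ) - 1) * qf n j := by
  have hq := qf_spec n j
  set q := qf n j with hq'
  have hsum : ∀ r ∈ Finset.range (k-1),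
      (i + (r:ℕ)) / (n:ℤ) = q + (if (n:ℤ)*(q+1) ≤ i + (r:ℕ) then 1 else 0) := by
    intro r hr
    simp only [Finset.mem_range] at hr
    have hrk : (r:ℤ) ≤ (k:ℤ) - 2 := by omega
    have hNq : (n:ℤ)*(q+1) = n*q + n := by ring
    by_cases h : (n:ℤ)*(q+1) ≤ i + (r:ℕ)
    · rw [if_pos h]
      refine ediv_eq n _ (q+1) h ?_
      have hh : (n:ℤ)*(q+1+1) = n*(q+1) + n := by ring
      omega
    · rw [if_neg h, add_zero]
      refine ediv_eq n (i + (r:ℕ)) q (by omega) (by omega)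
  rw [Sf, Finset.sum_congr rfl hsum, Finset.sum_add_distrib, Finset.sum_const,
    Finset.card_range, Finset.sum_boole, nsmul_eq_mul]
  have hmf : (((Finset.range (k-1)).filter fun r : ℕ => (n:ℤ)*(q+1) ≤ i + (r:ℕ)).card : ℤ)
      = (mf n k i j : ℤ) := by
    rw [mf, hq']
  rw [hmf]
  have hc : ((k:ℤ)-1) = ((k-1 : ℕ) : ℤ) := by omega
  rw [hc]; ring

end Arith

section Rot

lemma finRotate_pow_apply {k : ℕ} (hk : 0 < k) (c : ℕ) (s : Fin k) :
    ((((finRotate k)^c) s : ℕ)) = ((s:ℕ) + c) % k := by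
  obtain ⟨k', rfl⟩ := Nat.exists_eq_succ_of_ne_zero hk.ne'
  induction c with
  | zero => rw [pow_zero]; exact (Nat.mod_eq_of_lt s.isLt).symm
  | succ c ih =>
    rw [pow_succ', Equiv.Perm.mul_apply, finRotate_succ_apply, Fin.add_def, ih, Fin.val_one']
    conv_rhs => rw [show (s:ℕ) + (c+1) = ((s:ℕ) + c) + 1 by ring, Nat.add_mod]

lemma sign_finRotate_pow {k : ℕ} (hk : 0 < k) (c : ℕ) :
    Equiv.Perm.sign ((finRotate k)^c) = ((-1 : ℤˣ)^(k-1))^c := by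
  obtain ⟨k', rfl⟩ := Nat.exists_eq_succ_of_ne_zero hk.ne'
  rw [map_pow, sign_finRotate]

end Rot

section SignLemma

variable {k : ℕ} (A : Matrix (Fin k) (Fin n) K)

lemma cdet_union_eq (hk : 0 < k) (hkn : k < n) (i j : ℤ) (hji : j ≤ i)
    (hin : i ≤ j + (n:ℤ) - k) :
    cdet A (Finset.Icc (i+1) (i + (k:ℤ) - 1) ∪ {j})
      = sg (((k:ℤ) - 1) * (mf n k i j : ℤ)) * Mdet n k A i j := by
  classical
  have hn : (0:ℤ) < n := by exact_mod_cast npos n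
  obtain ⟨hq1, hq2⟩ := qf_spec n j
  set q := qf n j with hqdef
  set I : Finset ℤ := Finset.Icc (i+1) (i + (k:ℤ) - 1) ∪ {j} with hI
  have hmemI : ∀ x, x ∈ I ↔ (x = j ∨ (i + 1 ≤ x ∧ x ≤ i + (k:ℤ) - 1)) := by
    intro x
    simp [hI, Finset.mem_union, Finset.mem_Icc, Finset.mem_singleton, or_comm]
  have hmc := mf_closed n k i j
  rw [← hqdef] at hmc
  set m := mf n k i j with hmdef
  have hmk : m ≤ k - 1 := mf_le n k i j
  have hNq : (n:ℤ)*(q+1) = n*q + n := by ring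
  have hNq2 : (n:ℤ)*(q+1+1) = n*q + n + n := by ring
  rw [hNq] at hmc hq2
  -- criterion for "high" residues
  have hcrit : ∀ r : ℤ, 0 ≤ r → r ≤ (k:ℤ) - 2 →
      ((n:ℤ)*q + n ≤ i + r ↔ (k:ℤ) - 1 - m ≤ r) := by
    intro r h0 h1; omega
  -- the sorted enumeration
  set elt : Fin k → ℤ := fun s =>
    if (s:ℕ) < m then i + (k:ℤ) - m + (s:ℕ)
    else if (s:ℕ) = m then j else i + (s:ℕ) - m with helt
  have heltI : ∀ s, elt s ∈ I := by
    intro s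
    have hs := s.isLt
    rw [hmemI]
    simp only [helt]
    split_ifs with h1 h2
    · right; constructor <;> [omega; omega]
    · left; rfl
    · right
      have : (m:ℕ) < (s:ℕ) := by omega
      constructor <;> [omega; omega]
  have hval : ∀ s : Fin k, ((resFin n (elt s) : ℕ) : ℤ) =
      if (s:ℕ) < m then i + (k:ℤ) - m + (s:ℕ) - 1 - (n*q + n)
      else if (s:ℕ) = m then j - 1 - n*q
      else i + (s:ℕ) - m - 1 - n*q := by
    intro s
    have hs := s.isLt
    simp only [helt]
    split_ifs with h1 h2
    · have hhi : (n:ℤ)*q + n ≤ i + ((k:ℤ) - m + (s:ℕ) - 1) :=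
        (hcrit ((k:ℤ) - m + (s:ℕ) - 1) (by omega) (by omega)).mpr (by omega)
      rw [resFin_val_eq n _ (q+1) (by omega) (by omega)]
      ring
    · rw [resFin_val_eq n _ q (by omega) (by omega)]
    · have hsm : (m:ℕ) < (s:ℕ) := by omega
      have hnot : ¬((n:ℤ)*q + n ≤ i + ((s:ℕ) - (m:ℤ) - 1)) := by
        intro hcon
        have := (hcrit ((s:ℕ) - (m:ℤ) - 1) (by omega) (by omega)).mp hcon
        omega
      rw [resFin_val_eq n _ q (by omega) (by omega)]
  have hmono : StrictMono (fun s : Fin k => resFin n (elt s)) := by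
    intro s1 s2 hlt
    have h12 : (s1:ℕ) < (s2:ℕ) := hlt
    rw [Fin.lt_def]
    have v1 := hval s1
    have v2 := hval s2
    have hs1 := s1.isLt
    have hs2 := s2.isLt
    rw [show ((resFin n (elt s1)):ℕ) < ((resFin n (elt s2)):ℕ) ↔
      (((resFin n (elt s1)):ℕ):ℤ) < (((resFin n (elt s2)):ℕ):ℤ) by exact_mod_cast Iff.rfl,
      v1, v2]
    split_ifs <;> omega
  -- cardinality of the image
  have hcardI : I.card ≤ k := by
    refine le_trans (Finset.card_union_le _ _) ?_
    rw [Int.card_Icc, Finset.card_singleton]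
    omega
  have hcard : (I.image (resFin n)).card = k := by
    refine le_antisymm (le_trans (Finset.card_image_le) hcardI) ?_
    have : (Finset.univ : Finset (Fin k)).card ≤ (I.image (resFin n)).card := by
      refine Finset.card_le_card_of_injOn (fun s => resFin n (elt s))
        (fun s _ => Finset.mem_image_of_mem _ (heltI s)) ?_
      exact fun s1 _ s2 _ h => hmono.injective h
    simpa using this
  have hemb : ∀ s : Fin k, (I.image (resFin n)).orderEmbOfFin hcard s = resFin n (elt s) := by
    have := Finset.orderEmbOfFin_unique hcard
      (f := fun s => resFin n (elt s)) (fun s => Finset.mem_image_of_mem _ (heltI s)) hmono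
    intro s; rw [← this]
  -- the rotation
  set σ : Equiv.Perm (Fin k) := (finRotate k)^(k - m) with hσdef
  have hσval : ∀ s : Fin k, ((σ s : ℕ)) = if (s:ℕ) < m then (s:ℕ) + (k - m) else (s:ℕ) - m := by
    intro s
    have hs := s.isLt
    rw [hσdef, finRotate_pow_apply hk]
    by_cases h1 : (s:ℕ) < m
    · rw [if_pos h1]; exact Nat.mod_eq_of_lt (by omega)
    · rw [if_neg h1]
      have h2 : (s:ℕ) + (k - m) = k + ((s:ℕ) - m) := by omega
      rw [h2, Nat.add_mod_left]
      exact Nat.mod_eq_of_lt (by omega)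
  have hcomp : ∀ s : Fin k, resFin n (elt s) = resFin n (colfun k i j (σ s)) := by
    intro s
    have hs := s.isLt
    have hv := hσval s
    congr 1
    simp only [helt, colfun]
    by_cases h1 : (s:ℕ) < m
    · rw [if_pos h1]
      have h2 : ((σ s : ℕ)) ≠ 0 := by rw [hv, if_pos h1]; omega
      rw [if_neg h2, hv, if_pos h1]
      push_cast
      omega
    · by_cases h2 : (s:ℕ) = m
      · have h3 : ((σ s : ℕ)) = 0 := by rw [hv, if_neg h1]; omega
        rw [if_neg h1, if_pos h2, if_pos h3]
      · have h3 : ((σ s : ℕ)) ≠ 0 := by rw [hv, if_neg h1]; omega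
        rw [if_neg h1, if_neg h2, if_neg h3, hv, if_neg h1]
        have h4 : m < (s:ℕ) := by omega
        push_cast [Nat.cast_sub (by omega : m ≤ (s:ℕ))]
        ring
  -- compute the determinant
  rw [cdet, dif_pos hcard]
  have hM1 : (Matrix.of fun p s : Fin k => A p ((I.image (resFin n)).orderEmbOfFin hcard s))
      = (Matrix.of fun p s : Fin k => A p (resFin n (colfun k i j s))).submatrix id σ := by
    ext p s
    rw [Matrix.submatrix_apply]
    simp only [Matrix.of_apply, id]
    rw [hemb s, hcomp s]
  rw [hM1, Matrix.det_permute']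
  -- the sign
  have hsgn : ((Equiv.Perm.sign σ : ℤˣ) : ℤ) = ((-1:ℤ)^((k-1)*(k-m))) := by
    rw [hσdef, sign_finRotate_pow hk, ← pow_mul, Units.val_pow_eq_pow_val]
    norm_num
  rw [Mdet]
  congr 1
  have h0 : ((Equiv.Perm.sign σ : ℤˣ) : K) = (((Equiv.Perm.sign σ : ℤˣ) : ℤ) : K) := by
    norm_cast
  rw [h0, hsgn]
  push_cast
  rw [show ((-1:K)^((k-1)*(k-m))) = sg (((k-1)*(k-m) : ℕ) : ℤ) from sg_natpow _]
  refine sg_sub_even ?_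
  have hc : (((k-1)*(k-m) : ℕ) : ℤ) = ((k:ℤ)-1) * ((k:ℤ)-(m:ℤ)) := by
    push_cast [Nat.cast_sub hk, Nat.cast_sub (by omega : m ≤ k)]
    ring
  rw [hc]
  have h2 : ((k:ℤ)-1)*((k:ℤ)-(m:ℤ)) - ((k:ℤ)-1)*(m:ℤ)
      = ((k:ℤ)-1)*(((k:ℤ)-1)+1) - 2*(((k:ℤ)-1)*(m:ℤ)) := by ring
  rw [h2]
  exact (Int.even_mul_succ_self _).sub (even_two_mul _)

end SignLemma

section Window

variable {k : ℕ} (A : Matrix (Fin k) (Fin n) K)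

lemma Mdet_zero_right (hk : 0 < k) (i j : ℤ) (hlt : i < j) (hle : j ≤ i + (k:ℤ) - 1) :
    Mdet n k A i j = 0 := by
  set l := (j - i).toNat with hl
  have hlk : 1 ≤ l ∧ l ≤ k - 1 := by omega
  have hln : l ≠ 0 := by omega
  have hcol : colfun k i j (⟨l, by omega⟩ : Fin k) = j := by
    show (if l = 0 then j else i + (l:ℤ)) = j
    rw [if_neg hln]
    omega
  exact Mdet_zero n k A i j ⟨l, by omega⟩ hln (by rw [hcol])

lemma Mdet_zero_left (hk : 0 < k) (i j : ℤ) (h1 : j + (n:ℤ) - k < i) (h2 : i < j + (n:ℤ)) :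
    Mdet n k A i j = 0 := by
  have hn : (0:ℤ) < n := by exact_mod_cast npos n
  set l := (j + (n:ℤ) - i).toNat with hl
  have hlk : 1 ≤ l ∧ l ≤ k - 1 := by omega
  have hln : l ≠ 0 := by omega
  have hcol : colfun k i j (⟨l, by omega⟩ : Fin k) = j + (n:ℤ) := by
    show (if l = 0 then j else i + (l:ℤ)) = j + (n:ℤ)
    rw [if_neg hln]
    omega
  refine Mdet_zero n k A i j ⟨l, by omega⟩ hln ?_
  rw [hcol, resFin_eq_iff]
  exact ⟨1, by ring⟩

lemma FCU_eq_window (hk : 0 < k) (hkn : k < n) (i j : ℤ)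
    (hlo : j - k + 1 ≤ i) (hhi : i ≤ j + (n:ℤ) - 1) :
    FCU n A i j = alf n k i * bef n k j * Mdet n k A i j := by
  by_cases hband : j ≤ i ∧ i ≤ j + (n:ℤ) - k
  · rw [show FCU n A i j = cdet A (Finset.Icc (i + 1) (i + (k:ℤ) - 1) ∪ {j}) from by
      simp only [FCU]; rw [if_pos hband]]
    rw [cdet_union_eq n A hk hkn i j hband.1 hband.2]
    congr 1
    rw [alf, bef, ← sg_add]
    refine sg_sub_even ?_
    rw [mf_eq_S n k hk i j hband.1 hband.2]
    have h3 : ((k:ℤ)-1)*(Sf n k i - ((k:ℤ)-1)*qf n j)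
        - (((k:ℤ)-1)*Sf n k i + ((k:ℤ)-1)*qf n j)
        = -((((k:ℤ)-1)*(((k:ℤ)-1)+1))*qf n j) := by ring
    rw [h3]
    exact ((Int.even_mul_succ_self _).mul_right _).neg
  · rw [show FCU n A i j = 0 from by simp only [FCU]; rw [if_neg hband]]
    rcases lt_or_ge i j with hc | hc
    · rw [Mdet_zero_right n A hk i j hc (by omega)]; ring
    · rw [Mdet_zero_left n A hk i j (by omega) (by omega)]; ring

lemma FCU_diag (hk : 0 < k) (hkn : k < n) (hA : ConsecUnimodular n A) (a : ℤ) :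
    FCU n A a a = 1 := by
  have hcond : a ≤ a ∧ a ≤ a + (n:ℤ) - k := ⟨le_refl a, by omega⟩
  rw [show FCU n A a a = cdet A (Finset.Icc (a + 1) (a + (k:ℤ) - 1) ∪ {a}) from by
    simp only [FCU]; rw [if_pos hcond]]
  have hU : Finset.Icc (a+1) (a + (k:ℤ) - 1) ∪ {a} = Finset.Icc a (a + (k:ℤ) - 1) := by
    ext x
    simp only [Finset.mem_union, Finset.mem_Icc, Finset.mem_singleton]
    omega
  rw [hU]
  exact hA a

lemma sgsq (x y : K) (hx : x * x = 1) (hy : y * y = 1) : (x * y) * (x * y) = 1 := by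
  calc (x*y)*(x*y) = (x*x)*(y*y) := by ring
  _ = 1 := by rw [hx, hy, mul_one]

lemma alf_sq (x : ℤ) : (alf n k x : K) * alf n k x = 1 := by rw [alf]; exact sg_mul_self _
lemma bef_sq (x : ℤ) : (bef n k x : K) * bef n k x = 1 := by rw [bef]; exact sg_mul_self _

lemma Mdet_diag (hk : 0 < k) (hkn : k < n) (hA : ConsecUnimodular n A) (a : ℤ) :
    Mdet n k A a a = alf n k a * bef n k a := by
  have h := FCU_eq_window n A hk hkn a a (by omega) (by
    have hn : 0 < n := npos n; omega)
  rw [FCU_diag n A hk hkn hA a] at h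
  have hsq : (alf n k a * bef n k a) * (alf n k a * bef n k a) = (1:K) :=
    sgsq _ _ (alf_sq n a) (bef_sq n a)
  calc Mdet n k A a a
      = ((alf n k a * bef n k a) * (alf n k a * bef n k a)) * Mdet n k A a a := by
        rw [hsq, one_mul]
    _ = (alf n k a * bef n k a) * (alf n k a * bef n k a * Mdet n k A a a) := by ring
    _ = (alf n k a * bef n k a) * 1 := by rw [← h]
    _ = alf n k a * bef n k a := mul_one _

lemma sg_prod {ι : Type*} (s : Finset ι) (f : ι → ℤ) :
    (∏ i ∈ s, (sg (f i) : K)) = sg (∑ i ∈ s, f i) := by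
  classical
  induction s using Finset.induction with
  | empty => simp [sg]
  | insert _ _ hx ih =>
    rename_i x t
    rw [Finset.prod_insert hx, Finset.sum_insert hx, sg_add, ih]

lemma prod_sg_sq (f : Fin k → ℤ) :
    (∏ r : Fin k, (sg (f r) : K)) * (∏ r : Fin k, (sg (f r) : K)) = 1 := by
  rw [← Finset.prod_mul_distrib]
  rw [Finset.prod_congr rfl (fun r _ => sg_mul_self (f r))]
  exact Finset.prod_const_one

lemma prod_bef (hk : 0 < k) (x : ℤ) :
    (∏ r : Fin k, (bef n k (x + ((r:ℕ):ℤ)) : K)) = alf n k x * bef n k x := by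
  simp only [bef]
  rw [sg_prod]
  have hsum : (∑ r : Fin k, ((k:ℤ)-1) * qf n (x + ((r:ℕ):ℤ)))
      = ((k:ℤ)-1) * (qf n x + Sf n k x) := by
    rw [← Finset.mul_sum]
    congr 1
    rw [Fin.sum_univ_eq_sum_range (fun r => qf n (x + ((r:ℕ):ℤ)))]
    obtain ⟨k', rfl⟩ := Nat.exists_eq_succ_of_ne_zero hk.ne'
    rw [Finset.sum_range_succ']
    rw [add_comm]
    congr 1
    · simp only [Nat.cast_zero, add_zero, qf]
    · rw [Sf]
      refine Finset.sum_congr rfl fun r hr => ?_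
      rw [qf]
      congr 1
      push_cast
      ring
  rw [hsum, alf, ← sg_add]
  congr 1
  ring

end Window

section Minors

lemma orderEmbOfFin_Icc (a : ℤ) (c d : ℕ)
    (hc : (Finset.Icc a (a + (c:ℤ) - 1)).card = d) (r : Fin d) :
    (Finset.Icc a (a + (c:ℤ) - 1)).orderEmbOfFin hc r = a + ((r:ℕ) : ℤ) := by
  have hcd : c = d := by
    rw [Int.card_Icc] at hc
    omega
  subst hcd
  have h := Finset.orderEmbOfFin_unique hc (f := fun r : Fin c => a + ((r:ℕ):ℤ))
    (fun x => by simp only [Finset.mem_Icc]; have := x.isLt; omega)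
    (fun x y hxy => by
      have : (x:ℕ) < (y:ℕ) := hxy
      show a + ((x:ℕ):ℤ) < a + ((y:ℕ):ℤ)
      omega)
  rw [← h]

lemma minor_expand (C : ℤ → ℤ → K) (a b : ℤ) (c : ℕ) :
    minor C (Finset.Icc a (a + (c:ℤ) - 1)) (Finset.Icc b (b + (c:ℤ) - 1))
      = Matrix.det (Matrix.of fun r s : Fin c => C (a + ((r:ℕ):ℤ)) (b + ((s:ℕ):ℤ))) := by
  have hca : (Finset.Icc a (a + (c:ℤ) - 1)).card = c := by rw [Int.card_Icc]; omega
  have hcb : (Finset.Icc b (b + (c:ℤ) - 1)).card = c := by rw [Int.card_Icc]; omega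
  rw [minor, dif_pos (hcb.trans hca.symm)]
  rw [← Matrix.det_submatrix_equiv_self (finCongr hca.symm)]
  congr 1
  ext r s
  rw [Matrix.submatrix_apply]
  simp only [Matrix.of_apply]
  rw [orderEmbOfFin_Icc a c _ rfl, orderEmbOfFin_Icc b c _ (hcb.trans hca.symm)]
  rfl

variable {k : ℕ} (A : Matrix (Fin k) (Fin n) K)

lemma Mdet_matrix_eq (x : ℤ) :
    (Matrix.of fun p s : Fin k => A p (resFin n (x + ((s:ℕ):ℤ)))).det = Mdet n k A x x := by
  rw [Mdet]
  congr 1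
  ext p s
  simp only [Matrix.of_apply]
  congr 2
  simp only [colfun]
  split_ifs with h
  · rw [h]; norm_num
  · rfl

lemma minor_one (hk : 0 < k) (hkn : k < n) (hA : ConsecUnimodular n A) (a b : ℤ)
    (h1 : b ≤ a) (h2 : a ≤ b + (n:ℤ) - k) :
    minor (FCU n A) (Finset.Icc a (a + (k:ℤ) - 1)) (Finset.Icc b (b + (k:ℤ) - 1)) = 1 := by
  rw [minor_expand]
  have hwin : ∀ r s : Fin k, (b + ((s:ℕ):ℤ)) - k + 1 ≤ a + ((r:ℕ):ℤ)
      ∧ a + ((r:ℕ):ℤ) ≤ (b + ((s:ℕ):ℤ)) + (n:ℤ) - 1 := by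
    intro r s
    have hr := r.isLt
    have hs := s.isLt
    omega
  have hentry : (Matrix.of fun r s : Fin k => FCU n A (a + ((r:ℕ):ℤ)) (b + ((s:ℕ):ℤ)))
      = Matrix.of fun r s : Fin k => alf n k (a + ((r:ℕ):ℤ)) *
          ((Matrix.of fun r' s' : Fin k => bef n k (b + ((s':ℕ):ℤ)) *
            ((Matrix.of fun r'' s'' : Fin k =>
              Mdet n k A (a + ((r'':ℕ):ℤ)) (b + ((s'':ℕ):ℤ))) r' s')) r s) := by
    ext r s
    simp only [Matrix.of_apply]
    rw [FCU_eq_window n A hk hkn _ _ (hwin r s).1 (hwin r s).2]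
    ring
  rw [hentry, Matrix.det_mul_column, Matrix.det_mul_row]
  -- factor the inner matrix
  set U : Matrix (Fin k) (Fin k) K :=
    Matrix.of fun r p => cof n A (a + ((r:ℕ):ℤ)) p with hU
  set B : Matrix (Fin k) (Fin k) K :=
    Matrix.of fun p s => A p (resFin n (b + ((s:ℕ):ℤ))) with hB
  set C : Matrix (Fin k) (Fin k) K :=
    Matrix.of fun p s => A p (resFin n (a + ((s:ℕ):ℤ))) with hC
  have hMB : (Matrix.of fun r s : Fin k =>
      Mdet n k A (a + ((r:ℕ):ℤ)) (b + ((s:ℕ):ℤ))) = U * B := by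
    ext r s
    rw [Matrix.mul_apply, Matrix.of_apply, Mdet_eq_sum n A hk]
    exact Finset.sum_congr rfl fun p _ => mul_comm _ _
  have hUC : U * C = Matrix.of fun r r' : Fin k =>
      Mdet n k A (a + ((r:ℕ):ℤ)) (a + ((r':ℕ):ℤ)) := by
    ext r r'
    rw [Matrix.mul_apply, Matrix.of_apply, Mdet_eq_sum n A hk]
    exact Finset.sum_congr rfl fun p _ => mul_comm _ _
  have htri : (Matrix.of fun r r' : Fin k =>
      Mdet n k A (a + ((r:ℕ):ℤ)) (a + ((r':ℕ):ℤ))).BlockTriangular OrderDual.toDual := by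
    intro r r' hlt
    have hrr : (r':ℕ) > (r:ℕ) := hlt
    set l := (r':ℕ) - (r:ℕ) with hldef
    have hl : 1 ≤ l ∧ l < k := by have := r'.isLt; omega
    refine Mdet_zero n k A _ _ ⟨l, hl.2⟩ (show ¬ (l = 0) by omega) ?_
    congr 1
    show (if l = 0 then (a + ((r':ℕ):ℤ)) else (a + ((r:ℕ):ℤ)) + (l:ℤ)) = a + ((r':ℕ):ℤ)
    rw [if_neg (by omega)]
    omega
  have hdiag : ∀ r : Fin k, Mdet n k A (a + ((r:ℕ):ℤ)) (a + ((r:ℕ):ℤ))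
      = alf n k (a + ((r:ℕ):ℤ)) * bef n k (a + ((r:ℕ):ℤ)) :=
    fun r => Mdet_diag n A hk hkn hA _
  have hdetUC : U.det * C.det = ∏ r : Fin k,
      (alf n k (a + ((r:ℕ):ℤ)) * bef n k (a + ((r:ℕ):ℤ))) := by
    rw [← Matrix.det_mul, hUC, Matrix.det_of_lowerTriangular _ htri]
    exact Finset.prod_congr rfl fun r _ => hdiag r
  have hdetC : C.det = alf n k a * bef n k a := by
    rw [hC, Mdet_matrix_eq, Mdet_diag n A hk hkn hA]
  have hdetB : B.det = alf n k b * bef n k b := by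
    rw [hB, Mdet_matrix_eq, Mdet_diag n A hk hkn hA]
  have hCsq : (alf n k a * bef n k a) * (alf n k a * bef n k a) = (1:K) :=
    sgsq _ _ (alf_sq n a) (bef_sq n a)
  have hdetU : U.det = (∏ r : Fin k,
      (alf n k (a + ((r:ℕ):ℤ)) * bef n k (a + ((r:ℕ):ℤ)))) * (alf n k a * bef n k a) := by
    calc U.det = U.det * ((alf n k a * bef n k a) * (alf n k a * bef n k a)) := by
          rw [hCsq, mul_one]
      _ = (U.det * (alf n k a * bef n k a)) * (alf n k a * bef n k a) := by ring
      _ = (U.det * C.det) * (alf n k a * bef n k a) := by rw [hdetC]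
      _ = _ := by rw [hdetUC]
  rw [hMB, Matrix.det_mul, hdetU, hdetB, Finset.prod_mul_distrib,
    prod_bef n hk a, prod_bef n hk b]
  have halfsq : (∏ r : Fin k, (alf n k (a + ((r:ℕ):ℤ)) : K))
      * (∏ r : Fin k, (alf n k (a + ((r:ℕ):ℤ)) : K)) = 1 := by
    simp only [alf]
    exact prod_sg_sq _
  trans ((∏ r : Fin k, (alf n k (a + ((r:ℕ):ℤ)) : K))
      * (∏ r : Fin k, (alf n k (a + ((r:ℕ):ℤ)) : K)))
    * ((alf n k a * alf n k a) * ((bef n k a * bef n k a)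
      * ((alf n k b * alf n k b) * (bef n k b * bef n k b))))
  · ring
  · rw [halfsq, alf_sq, bef_sq, alf_sq, bef_sq]
    norm_num

lemma minor_zerok (hk : 0 < k) (hkn : k < n) (a b : ℤ)
    (h1 : b < a) (h2 : a < b + (n:ℤ) - k) :
    minor (FCU n A) (Finset.Icc a (a + ((k:ℤ)+1) - 1)) (Finset.Icc b (b + ((k:ℤ)+1) - 1)) = 0 := by
  have hcast : ((k:ℤ)+1) = (((k+1):ℕ):ℤ) := by push_cast; ring
  rw [hcast, minor_expand]
  have hwin : ∀ r s : Fin (k+1), (b + ((s:ℕ):ℤ)) - k + 1 ≤ a + ((r:ℕ):ℤ)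
      ∧ a + ((r:ℕ):ℤ) ≤ (b + ((s:ℕ):ℤ)) + (n:ℤ) - 1 := by
    intro r s
    have hr := r.isLt
    have hs := s.isLt
    omega
  have hentry : (Matrix.of fun r s : Fin (k+1) => FCU n A (a + ((r:ℕ):ℤ)) (b + ((s:ℕ):ℤ)))
      = Matrix.of fun r s : Fin (k+1) => alf n k (a + ((r:ℕ):ℤ)) *
          ((Matrix.of fun r' s' : Fin (k+1) => bef n k (b + ((s':ℕ):ℤ)) *
            ((Matrix.of fun r'' s'' : Fin (k+1) =>
              Mdet n k A (a + ((r'':ℕ):ℤ)) (b + ((s'':ℕ):ℤ))) r' s')) r s) := by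
    ext r s
    simp only [Matrix.of_apply]
    rw [FCU_eq_window n A hk hkn _ _ (hwin r s).1 (hwin r s).2]
    ring
  rw [hentry, Matrix.det_mul_column, Matrix.det_mul_row]
  -- the inner matrix is a product of padded rectangular matrices
  set U : Matrix (Fin (k+1)) (Fin (k+1)) K :=
    Matrix.of fun r p => Fin.lastCases 0 (fun p' => cof n A (a + ((r:ℕ):ℤ)) p') p with hU
  set B : Matrix (Fin (k+1)) (Fin (k+1)) K :=
    Matrix.of fun p s => Fin.lastCases 0 (fun p' => A p' (resFin n (b + ((s:ℕ):ℤ)))) p with hB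
  have hMB : (Matrix.of fun r s : Fin (k+1) =>
      Mdet n k A (a + ((r:ℕ):ℤ)) (b + ((s:ℕ):ℤ))) = U * B := by
    ext r s
    rw [Matrix.mul_apply, Matrix.of_apply, Mdet_eq_sum n A hk, Fin.sum_univ_castSucc]
    have hlast : U r (Fin.last k) * B (Fin.last k) s = 0 := by
      simp [hU, hB]
    rw [hlast, add_zero]
    refine Finset.sum_congr rfl fun p _ => ?_
    simp only [hU, hB, Matrix.of_apply, Fin.lastCases_castSucc]
    ring
  have hUdet : U.det = 0 :=
    Matrix.det_eq_zero_of_column_eq_zero (Fin.last k) (fun r => by simp [hU])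
  rw [hMB, Matrix.det_mul, hUdet, zero_mul, mul_zero, mul_zero]

end Minors

section Prefrieze

variable {k : ℕ} (A : Matrix (Fin k) (Fin n) K)

lemma resFin_add_n (x : ℤ) : resFin n (x + n) = resFin n x :=
  (resFin_eq_iff n _ _).mpr ⟨1, by ring⟩

lemma cdet_congr {I I' : Finset ℤ} (h : I.image (resFin n) = I'.image (resFin n)) :
    cdet A I = cdet A I' := by
  simp only [cdet, h]

lemma img_shift (hk : 0 < k) (hkn : k < n) (a : ℤ) :
    (Finset.Icc (a + ((n:ℤ) - k) + 1) (a + ((n:ℤ) - k) + (k:ℤ) - 1) ∪ {a}).image (resFin n)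
      = (Finset.Icc (a - (k:ℤ) + 1) ((a - (k:ℤ) + 1) + (k:ℤ) - 1)).image (resFin n) := by
  ext y
  simp only [Finset.mem_image, Finset.mem_union, Finset.mem_Icc, Finset.mem_singleton]
  constructor
  · rintro ⟨x, hx | hx, rfl⟩
    · refine ⟨x - n, by omega, ?_⟩
      rw [← resFin_add_n n (x - n)]
      congr 1
      ring
    · exact ⟨x, by omega, rfl⟩
  · rintro ⟨x, hx, rfl⟩
    by_cases hxa : x = a
    · exact ⟨a, Or.inr rfl, by rw [hxa]⟩
    · exact ⟨x + n, Or.inl (by omega), resFin_add_n n x⟩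

lemma FCU_diag2 (hk : 0 < k) (hkn : k < n) (hA : ConsecUnimodular n A) (a : ℤ) :
    FCU n A (a + ((n:ℤ) - k)) a = 1 := by
  have hcond : a ≤ a + ((n:ℤ)-k) ∧ a + ((n:ℤ)-k) ≤ a + (n:ℤ) - k := ⟨by omega, by omega⟩
  rw [show FCU n A (a + ((n:ℤ)-k)) a
      = cdet A (Finset.Icc ((a + ((n:ℤ)-k)) + 1) ((a + ((n:ℤ)-k)) + (k:ℤ) - 1) ∪ {a}) from by
    simp only [FCU]; rw [if_pos hcond]]
  rw [cdet_congr n A (by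
    have h := img_shift n hk hkn a
    convert h using 3 <;> ring)]
  exact hA (a - (k:ℤ) + 1)

end Prefrieze

end FP

/-- **`F(A)` is an `SL(k)`-frieze.** If `0 < k < n` and `A` is a consecutively
unimodular `k × n` matrix, then the matrix `F(A)`, with entries
`det(A_{[a+1,a+k-1] ∪ {b}})` for `b ≤ a ≤ b + n - k` and `0` otherwise,
is an `SL(k)`-frieze of height `n - k`. -/
theorem FCU_isSLFrieze (n k : ℕ) [NeZero n] (hk : 0 < k) (hkn : k < n)
    (A : Matrix (Fin k) (Fin n) K) (hA : ConsecUnimodular n A) :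
    IsSLFrieze k (n - k) (FCU n A) := by
  have hcast : ((n - k : ℕ) : ℤ) = (n:ℤ) - (k:ℤ) := by omega
  refine ⟨⟨fun a => FP.FCU_diag n A hk hkn hA a, fun a => ?_, fun a b h => ?_⟩,
    fun a b hba hab => ?_, fun a b hba hab => ?_⟩
  · rw [hcast]
    exact FP.FCU_diag2 n A hk hkn hA a
  · rw [hcast] at h
    simp only [FCU]
    rw [if_neg]
    rintro ⟨h1, h2⟩
    omega
  · rw [hcast] at hab
    exact FP.minor_one n A hk hkn hA a b hba (by omega)
  · rw [hcast] at hab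
    have hI : ∀ x : ℤ, Finset.Icc x (x + (k:ℤ)) = Finset.Icc x (x + ((k:ℤ)+1) - 1) := by
      intro x; congr 1; ring
    rw [hI a, hI b]
    exact FP.minor_zerok n A hk hkn a b hba (by omega)
end

section
/- If C is an SL(k)-frieze of height h over a field 𝕜, then its (h+k)-truncated dual C† is an SL(h)-frieze of height k, and the (h+k)-truncated dual of C† equals C. Hence taking (h+k)-truncated duals defines mutually inverse bijections between the set of SL(k)-friezes of height h and the set of SL(h)-friezes of height k. -/
open Finset

variable {K : Type*} [Field K]

/-- The `m`-truncated dual `C†` of a prefrieze `C`. -/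
noncomputable def truncDual (m : ℕ) (C : ℤ → ℤ → K) : ℤ → ℤ → K :=
  fun a b =>
    if b ≤ a ∧ a < b + m then minor C (Finset.Icc (b + 1) a) (Finset.Icc b (a - 1)) else 0

namespace FriezeDual

open Matrix

/-- adjacent minor of size `s`, rows starting at `a`, cols at `b`. -/
noncomputable def D (C : ℤ → ℤ → K) (s : ℕ) (a b : ℤ) : K :=
  Matrix.det (Matrix.of fun i j : Fin s => C (a + i) (b + j))

lemma Icc_card (a : ℤ) (s : ℕ) : (Finset.Icc a (a + s - 1)).card = s := by
  rw [Int.card_Icc]; omega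

lemma Icc_orderEmb (a : ℤ) (s : ℕ) {m : ℕ} (h : (Finset.Icc a (a + s - 1)).card = m)
    (i : Fin m) : (Finset.Icc a (a + s - 1)).orderEmbOfFin h i = a + i := by
  have hm : m = s := by rw [← h, Icc_card]
  subst hm
  have := Finset.orderEmbOfFin_unique (f := fun i : Fin m => a + (i : ℤ)) h
    (fun x => by simp only [Finset.mem_Icc]; constructor <;> [omega; (have := x.isLt; omega)])
    (fun x y hxy => by simpa using (by exact_mod_cast hxy : (x:ℤ) < y))
  exact (congrFun this i).symm

lemma minor_eq (f : ℤ → ℤ → K) (a b : ℤ) (s : ℕ) :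
    minor f (Finset.Icc a (a + s - 1)) (Finset.Icc b (b + s - 1)) = D f s a b := by
  have hI : (Finset.Icc a (a + s - 1)).card = s := Icc_card a s
  have hJ : (Finset.Icc b (b + s - 1)).card = (Finset.Icc a (a + s - 1)).card := by
    rw [Icc_card, Icc_card]
  rw [minor, dif_pos hJ]
  rw [D, ← Matrix.det_submatrix_equiv_self (finCongr hI.symm)]
  congr 1
  ext i j
  simp only [Matrix.submatrix_apply, Matrix.of_apply, finCongr_apply]
  rw [Icc_orderEmb, Icc_orderEmb]
  simp


lemma det_lowerUni {n : ℕ} (M : Matrix (Fin n) (Fin n) K)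
    (h0 : ∀ i j : Fin n, (i : ℕ) < j → M i j = 0) (h1 : ∀ i, M i i = 1) :
    M.det = 1 := by
  rw [Matrix.det_of_lowerTriangular M (fun i j hij => h0 i j hij)]
  simp [h1]

lemma det_upperUni {n : ℕ} (M : Matrix (Fin n) (Fin n) K)
    (h0 : ∀ i j : Fin n, (j : ℕ) < i → M i j = 0) (h1 : ∀ i, M i i = 1) :
    M.det = 1 := by
  rw [Matrix.det_of_upperTriangular (fun i j hij => h0 i j hij)]
  simp [h1]

/-- split with zero top-right block -/
lemma det_split₁₂ {t u : ℕ} (M : Matrix (Fin (t + u)) (Fin (t + u)) K)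
    (h0 : ∀ i j : Fin (t + u), (i : ℕ) < t → t ≤ (j : ℕ) → M i j = 0) :
    M.det = (Matrix.of fun i j : Fin t => M (Fin.castAdd u i) (Fin.castAdd u j)).det *
      (Matrix.of fun i j : Fin u => M (Fin.natAdd t i) (Fin.natAdd t j)).det := by
  rw [← Matrix.det_submatrix_equiv_self finSumFinEquiv M]
  have he : M.submatrix finSumFinEquiv finSumFinEquiv =
      Matrix.fromBlocks (Matrix.of fun i j : Fin t => M (Fin.castAdd u i) (Fin.castAdd u j)) 0
        (Matrix.of fun (i : Fin u) (j : Fin t) => M (Fin.natAdd t i) (Fin.castAdd u j))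
        (Matrix.of fun i j : Fin u => M (Fin.natAdd t i) (Fin.natAdd t j)) := by
    ext i j
    rcases i with i | i <;> rcases j with j | j
    · rfl
    · simpa using h0 (Fin.castAdd u i) (Fin.natAdd t j) (by simp) (by simp)
    · rfl
    · rfl
  rw [he, Matrix.det_fromBlocks_zero₁₂]

/-- split with zero bottom-left block -/
lemma det_split₂₁ {t u : ℕ} (M : Matrix (Fin (t + u)) (Fin (t + u)) K)
    (h0 : ∀ i j : Fin (t + u), t ≤ (i : ℕ) → (j : ℕ) < t → M i j = 0) :
    M.det = (Matrix.of fun i j : Fin t => M (Fin.castAdd u i) (Fin.castAdd u j)).det *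
      (Matrix.of fun i j : Fin u => M (Fin.natAdd t i) (Fin.natAdd t j)).det := by
  rw [← Matrix.det_submatrix_equiv_self finSumFinEquiv M]
  have he : M.submatrix finSumFinEquiv finSumFinEquiv =
      Matrix.fromBlocks (Matrix.of fun i j : Fin t => M (Fin.castAdd u i) (Fin.castAdd u j))
        (Matrix.of fun (i : Fin t) (j : Fin u) => M (Fin.castAdd u i) (Fin.natAdd t j))
        0
        (Matrix.of fun i j : Fin u => M (Fin.natAdd t i) (Fin.natAdd t j)) := by
    ext i j
    rcases i with i | i <;> rcases j with j | j
    · rfl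
    · rfl
    · simpa using h0 (Fin.natAdd t i) (Fin.castAdd u j) (by simp) (by simp)
    · rfl
  rw [he, Matrix.det_fromBlocks_zero₂₁]




lemma succAbove_coe_lt {n : ℕ} (j : Fin (n+1)) (p : Fin n) (h : (p:ℕ) < (j:ℕ)) :
    ((j.succAbove p) : ℕ) = p := by
  rw [Fin.succAbove, if_pos (by rwa [Fin.lt_def])]
  simp

lemma succAbove_coe_ge {n : ℕ} (j : Fin (n+1)) (p : Fin n) (h : (j:ℕ) ≤ (p:ℕ)) :
    ((j.succAbove p) : ℕ) = p + 1 := by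
  rw [Fin.succAbove, if_neg (by rw [Fin.lt_def]; simp; omega)]
  rfl

variable {C : ℤ → ℤ → K}

section Dlem
variable (hd : ∀ a : ℤ, C a a = 1) (hlt : ∀ a b : ℤ, a < b → C a b = 0)

include hd hlt in
lemma D_diag (s : ℕ) (a : ℤ) : D C s a a = 1 := by
  apply det_lowerUni
  · intro i j hij
    exact hlt _ _ (by omega)
  · intro i; exact hd _

include hd hlt in
lemma lowerUni_det (s : ℕ) (x : ℤ)
    (M : Matrix (Fin s) (Fin s) K)
    (hM : ∀ p q : Fin s, ∃ x' y' : ℤ, M p q = C x' y' ∧ x' - x = p ∧ y' - x = q) :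
    M.det = 1 := by
  apply det_lowerUni
  · intro i j hij
    obtain ⟨x', y', hM', hx', hy'⟩ := hM i j
    rw [hM']; exact hlt _ _ (by omega)
  · intro i
    obtain ⟨x', y', hM', hx', hy'⟩ := hM i i
    rw [hM', show x' = y' by omega]; exact hd _

include hd hlt in
lemma det_delete {n : ℕ} (b : ℤ) (i j : Fin (n+1)) (hji : (j:ℕ) ≤ (i:ℕ)) :
    ((Matrix.of fun p q : Fin (n+1) => C (b + (p:ℕ)) (b + (q:ℕ))).submatrix
      j.succAbove i.succAbove).det = D C ((i:ℕ) - (j:ℕ)) (b + (j:ℕ) + 1) (b + (j:ℕ)) := by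
  have hjn : (j:ℕ) ≤ n := by omega
  have hin : (i:ℕ) ≤ n := by omega
  set G := (Matrix.of fun p q : Fin (n+1) => C (b + (p:ℕ)) (b + (q:ℕ))).submatrix
      j.succAbove i.succAbove with hG
  have hGval : ∀ p q : Fin n, G p q = C (b + ((j.succAbove p : Fin (n+1)):ℕ))
      (b + ((i.succAbove q : Fin (n+1)):ℕ)) := fun p q => rfl
  obtain ⟨e1, he1⟩ : ∃ e : Fin ((j:ℕ) + (n - (j:ℕ))) ≃ Fin n,
      ∀ q, ((e q : Fin n):ℕ) = (q:ℕ) := ⟨finCongr (by omega), fun q => rfl⟩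
  rw [← Matrix.det_submatrix_equiv_self e1 G]
  rw [det_split₁₂]
  · have hTL : (Matrix.of fun p q : Fin (j:ℕ) =>
        (G.submatrix e1 e1) (Fin.castAdd _ p) (Fin.castAdd _ q)).det = 1 := by
      apply lowerUni_det hd hlt _ b
      intro p q
      refine ⟨_, _, by simp only [Matrix.of_apply, Matrix.submatrix_apply]; rw [hGval], ?_, ?_⟩
      · rw [succAbove_coe_lt j _ (by simp only [he1, Fin.coe_castAdd]; omega)]
        simp only [he1, Fin.coe_castAdd]; omega
      · rw [succAbove_coe_lt i _ (by simp only [he1, Fin.coe_castAdd]; omega)]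
        simp only [he1, Fin.coe_castAdd]; omega
    rw [hTL, one_mul]
    set B2 := (Matrix.of fun p q : Fin (n - (j:ℕ)) =>
        (G.submatrix e1 e1) (Fin.natAdd _ p) (Fin.natAdd _ q)) with hB2
    have hB2val : ∀ p q : Fin (n - (j:ℕ)), B2 p q =
        C (b + ((j:ℕ) + (p:ℕ) + 1 : ℕ)) (b + ((i.succAbove (e1 (Fin.natAdd _ q)) : Fin (n+1)):ℕ)) := by
      intro p q
      simp only [hB2, Matrix.of_apply, Matrix.submatrix_apply]
      rw [hGval, succAbove_coe_ge j _ (by simp only [he1, Fin.coe_natAdd]; omega)]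
      simp only [he1, Fin.coe_natAdd]
    obtain ⟨e2, he2⟩ : ∃ e : Fin (((i:ℕ) - (j:ℕ)) + (n - (i:ℕ))) ≃ Fin (n - (j:ℕ)),
        ∀ q, ((e q : Fin (n - (j:ℕ))):ℕ) = (q:ℕ) := ⟨finCongr (by omega), fun q => rfl⟩
    rw [← Matrix.det_submatrix_equiv_self e2 B2]
    rw [det_split₁₂]
    · have hTL2 : (Matrix.of fun p q : Fin ((i:ℕ) - (j:ℕ)) =>
          ((B2.submatrix e2 e2)) (Fin.castAdd _ p) (Fin.castAdd _ q)).det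
          = D C ((i:ℕ) - (j:ℕ)) (b + (j:ℕ) + 1) (b + (j:ℕ)) := by
        rw [D]
        congr 1
        ext p q
        simp only [Matrix.of_apply, Matrix.submatrix_apply]
        rw [hB2val]
        rw [succAbove_coe_lt i _
          (by simp only [he1, he2, Fin.coe_natAdd, Fin.coe_castAdd]; omega)]
        simp only [he1, he2, Fin.coe_natAdd, Fin.coe_castAdd]
        congr 1 <;> push_cast <;> omega
      have hBR2 : (Matrix.of fun p q : Fin (n - (i:ℕ)) =>
          ((B2.submatrix e2 e2)) (Fin.natAdd _ p) (Fin.natAdd _ q)).det = 1 := by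
        apply lowerUni_det hd hlt _ (b + (i:ℕ) + 1)
        intro p q
        refine ⟨_, _, by simp only [Matrix.of_apply, Matrix.submatrix_apply]; rw [hB2val], ?_, ?_⟩
        · simp only [he1, he2, Fin.coe_natAdd, Fin.coe_castAdd]; push_cast; omega
        · rw [succAbove_coe_ge i _
            (by simp only [he1, he2, Fin.coe_natAdd, Fin.coe_castAdd]; omega)]
          simp only [he1, he2, Fin.coe_natAdd, Fin.coe_castAdd]; push_cast; omega
      rw [hTL2, hBR2, mul_one]
    · intro p q hp hq
      simp only [Matrix.submatrix_apply]
      rw [hB2val]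
      apply hlt
      rw [succAbove_coe_ge i _
        (by simp only [he1, he2, Fin.coe_natAdd, Fin.coe_castAdd]; omega)]
      simp only [he1, he2, Fin.coe_natAdd, Fin.coe_castAdd]
      push_cast
      omega
  · intro p q hp hq
    simp only [Matrix.submatrix_apply]
    rw [hGval]
    apply hlt
    rw [succAbove_coe_lt j _ (by simp only [he1, Fin.coe_castAdd]; omega)]
    have h2 : (j:ℕ) ≤ ((i.succAbove (e1 q) : Fin (n+1)) : ℕ) := by
      rcases le_or_gt (i:ℕ) ((e1 q : Fin n):ℕ) with hc | hc
      · rw [succAbove_coe_ge i _ hc]; omega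
      · rw [succAbove_coe_lt i _ hc]; simp only [he1]; omega
    simp only [he1, Fin.coe_castAdd] at h2 ⊢
    omega

end Dlem



variable {C : ℤ → ℤ → K}

lemma adjugate_cofactor {n : ℕ} (A : Matrix (Fin (n+1)) (Fin (n+1)) K) (i j : Fin (n+1)) :
    Matrix.adjugate A i j
      = (-1:K)^((i:ℕ)+(j:ℕ)) * (A.submatrix j.succAbove i.succAbove).det := by
  rw [Matrix.adjugate_apply, Matrix.det_succ_row _ j]
  rw [Finset.sum_eq_single i]
  · rw [Matrix.updateRow_self]
    rw [Pi.single_apply, if_pos rfl, mul_one]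
    have hsub : (A.updateRow j (Pi.single i 1)).submatrix j.succAbove i.succAbove
        = A.submatrix j.succAbove i.succAbove := by
      ext p q
      simp only [Matrix.submatrix_apply]
      rw [Matrix.updateRow_ne (Fin.succAbove_ne j p)]
    rw [hsub, add_comm]
  · intro t _ hti
    rw [Matrix.updateRow_self, Pi.single_apply, if_neg hti, mul_zero, zero_mul]
  · intro h; exact absurd (Finset.mem_univ i) h

section Dlem
variable (hd : ∀ a : ℤ, C a a = 1) (hlt : ∀ a b : ℤ, a < b → C a b = 0)

include hlt in
lemma det_delete_zero {n : ℕ} (b : ℤ) (i j : Fin (n+1)) (hij : (i:ℕ) < (j:ℕ)) :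
    ((Matrix.of fun p q : Fin (n+1) => C (b + (p:ℕ)) (b + (q:ℕ))).submatrix
      j.succAbove i.succAbove).det = 0 := by
  set G := (Matrix.of fun p q : Fin (n+1) => C (b + (p:ℕ)) (b + (q:ℕ))).submatrix
      j.succAbove i.succAbove with hG
  have hGval : ∀ p q : Fin n, G p q = C (b + ((j.succAbove p : Fin (n+1)):ℕ))
      (b + ((i.succAbove q : Fin (n+1)):ℕ)) := fun p q => rfl
  have htri : ∀ p q : Fin n, (p:ℕ) < (q:ℕ) → G p q = 0 := by
    intro p q hpq
    rw [hGval]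
    apply hlt
    rcases lt_or_ge (p:ℕ) (j:ℕ) with h1 | h1 <;> rcases lt_or_ge (q:ℕ) (i:ℕ) with h2 | h2
    · rw [succAbove_coe_lt j p h1, succAbove_coe_lt i q h2]; omega
    · rw [succAbove_coe_lt j p h1, succAbove_coe_ge i q h2]; omega
    · omega
    · rw [succAbove_coe_ge j p h1, succAbove_coe_ge i q h2]; omega
  rw [Matrix.det_of_lowerTriangular G (fun p q hpq => htri p q hpq)]
  have hin : (i:ℕ) < n := by have := j.isLt; omega
  apply Finset.prod_eq_zero (Finset.mem_univ (⟨(i:ℕ), hin⟩ : Fin n))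
  rw [hGval]
  apply hlt
  rw [succAbove_coe_lt j _ (by simpa using hij), succAbove_coe_ge i _ (by simp)]
  simp

end Dlem

/-- the window matrix -/
noncomputable def Wmat (C : ℤ → ℤ → K) (b : ℤ) (N : ℕ) : Matrix (Fin N) (Fin N) K :=
  Matrix.of fun p q => C (b + (p:ℕ)) (b + (q:ℕ))

/-- the signed dual window matrix -/
noncomputable def Wd (C : ℤ → ℤ → K) (b : ℤ) (N : ℕ) : Matrix (Fin N) (Fin N) K :=
  Matrix.of fun p q => (-1:K)^((p:ℕ)+(q:ℕ)) *
    (if (q:ℕ) ≤ (p:ℕ) then D C ((p:ℕ)-(q:ℕ)) (b + (q:ℕ) + 1) (b + (q:ℕ)) else 0)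

section Dlem2
variable (hd : ∀ a : ℤ, C a a = 1) (hlt : ∀ a b : ℤ, a < b → C a b = 0)

include hd hlt in
lemma det_Wmat (b : ℤ) (N : ℕ) : (Wmat C b N).det = 1 :=
  D_diag hd hlt N b

include hd hlt in
lemma adjugate_Wmat (b : ℤ) (N : ℕ) : Matrix.adjugate (Wmat C b N) = Wd C b N := by
  cases N with
  | zero => apply Subsingleton.elim
  | succ n =>
    ext i j
    rw [adjugate_cofactor, Wd]
    unfold Wmat
    by_cases hji : (j:ℕ) ≤ (i:ℕ)
    · rw [Matrix.of_apply, if_pos hji, det_delete hd hlt b i j hji]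
    · rw [Matrix.of_apply, if_neg hji, det_delete_zero hlt b i j (by omega), mul_zero]

include hd hlt in
lemma Wmat_mul_Wd (b : ℤ) (N : ℕ) : Wmat C b N * Wd C b N = 1 := by
  have h := Matrix.mul_adjugate (Wmat C b N)
  rwa [adjugate_Wmat hd hlt, det_Wmat hd hlt, one_smul] at h

include hd hlt in
lemma Wd_mul_Wmat (b : ℤ) (N : ℕ) : Wd C b N * Wmat C b N = 1 := by
  have h := Matrix.adjugate_mul (Wmat C b N)
  rwa [adjugate_Wmat hd hlt, det_Wmat hd hlt, one_smul] at h

include hd hlt in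
lemma det_Wd (b : ℤ) (N : ℕ) : (Wd C b N).det = 1 := by
  have h := congrArg Matrix.det (Wmat_mul_Wd hd hlt b N)
  rwa [Matrix.det_mul, det_Wmat hd hlt, one_mul, Matrix.det_one] at h

end Dlem2



open Fin.NatCast Fin.CommRing in
lemma finRotate_pow {N : ℕ} (p : ℕ) : ∀ i : Fin (N+1),
    ((finRotate (N+1))^p) i = i + (p : Fin (N+1)) := by
  induction p with
  | zero => intro i; simp
  | succ p ih =>
    intro i
    rw [pow_succ, Equiv.Perm.mul_apply, finRotate_succ_apply, ih]
    push_cast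
    ring

lemma jacobi_corner {m t : ℕ} (A B : Matrix (Fin (m + t + 1)) (Fin (m + t + 1)) K)
    (hAB : A * B = 1) (hdet : A.det = 1) :
    (Matrix.of fun i j : Fin (t+1) => B ⟨m + (i:ℕ), by omega⟩ ⟨(j:ℕ), by omega⟩).det
      = (-1:K)^(m * (t+1)) *
        (Matrix.of fun i j : Fin m => A ⟨(t+1) + (i:ℕ), by omega⟩ ⟨(j:ℕ), by omega⟩).det := by
  set U : Matrix (Fin (m + t + 1)) (Fin (m + t + 1)) K := Matrix.of
    fun (i j : Fin (m + t + 1)) =>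
      if hj : (j:ℕ) < t+1 then B i ⟨(j:ℕ), by omega⟩
      else if (i:ℕ) + (t+1) = (j:ℕ) then 1 else 0 with hU
  -- Step 1 : A * U explicitly
  have hAU : A * U = Matrix.of fun (i j : Fin (m + t + 1)) =>
      if hj : (j:ℕ) < t+1 then (if (i:ℕ) = (j:ℕ) then (1:K) else 0)
      else A i ⟨(j:ℕ) - (t+1), by omega⟩ := by
    ext i j
    rw [Matrix.mul_apply]
    by_cases hj : (j:ℕ) < t+1
    · have h1 := congrFun (congrFun hAB i) ⟨(j:ℕ), by omega⟩
      rw [Matrix.mul_apply] at h1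
      simp only [hU, Matrix.of_apply, dif_pos hj]
      rw [h1]
      simp [Matrix.one_apply, Fin.ext_iff, hj]
    · simp only [hU, Matrix.of_apply, dif_neg hj]
      rw [Finset.sum_eq_single (⟨(j:ℕ) - (t+1), by omega⟩ : Fin (m + t + 1))]
      · rw [if_pos (by simp only [Fin.val_mk]; omega), mul_one]
      · intro x _ hx
        have hne : ¬ ((x:ℕ) + (t+1) = (j:ℕ)) := by
          intro hc
          exact hx (by rw [Fin.ext_iff]; simp only [Fin.val_mk]; omega)
        rw [if_neg hne, mul_zero]
      · intro hmem; exact absurd (Finset.mem_univ _) hmem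
  -- Step 2 : det (A * U)
  have hdetAU : (A * U).det
      = (Matrix.of fun i j : Fin m => A ⟨(t+1) + (i:ℕ), by omega⟩ ⟨(j:ℕ), by omega⟩).det := by
    rw [hAU]
    obtain ⟨e, he⟩ : ∃ e : Fin ((t+1) + m) ≃ Fin (m + t + 1),
        ∀ q, ((e q : Fin (m + t + 1)):ℕ) = (q:ℕ) := ⟨finCongr (by omega), fun q => rfl⟩
    rw [← Matrix.det_submatrix_equiv_self e]
    rw [det_split₂₁]
    · have hTL : ∀ M : Matrix (Fin (t+1)) (Fin (t+1)) K,
          (∀ p q : Fin (t+1), M p q = if (p:ℕ) = (q:ℕ) then (1:K) else 0) → M.det = 1 := by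
        intro M hM
        have hM1 : M = 1 := by
          ext p q
          rw [hM]
          simp only [Matrix.one_apply, Fin.ext_iff]
        rw [hM1, Matrix.det_one]
      rw [hTL _ (fun p q => by
        simp only [Matrix.of_apply, Matrix.submatrix_apply]
        rw [dif_pos (by simp only [he, Fin.coe_castAdd]; omega)]
        simp only [he, Fin.coe_castAdd]), one_mul]
      congr 1
      ext p q
      simp only [Matrix.of_apply, Matrix.submatrix_apply]
      rw [dif_neg (by simp only [he, Fin.coe_natAdd]; omega)]
      congr 1 <;> rw [Fin.ext_iff] <;> simp only [he, Fin.coe_natAdd, Fin.val_mk] <;> omega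
    · intro p q hp hq
      simp only [Matrix.of_apply, Matrix.submatrix_apply]
      rw [dif_pos (by simp only [he, Fin.coe_castAdd] at hq ⊢; omega)]
      rw [if_neg (by simp only [he] at hp hq ⊢; omega)]
  -- Step 3 : det U
  set σ : Equiv.Perm (Fin (m + t + 1)) := (finRotate (m + t + 1))^(t+1) with hσ
  have hσval : ∀ j : Fin (m + t + 1), ((σ j : Fin (m + t + 1)):ℕ)
      = ((j:ℕ) + (t+1)) % (m + t + 1) := by
    intro j
    rw [hσ, finRotate_pow, Fin.add_def]
    simp only [Fin.val_natCast]
    rw [Nat.add_mod_mod]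
  obtain ⟨f, hf⟩ : ∃ f : Fin (m + (t+1)) ≃ Fin (m + t + 1),
      ∀ q, ((f q : Fin (m + t + 1)):ℕ) = (q:ℕ) := ⟨finCongr (by omega), fun q => rfl⟩
  have hdetU : ((U.submatrix id σ).submatrix f f).det
      = (Matrix.of fun i j : Fin (t+1) => B ⟨m + (i:ℕ), by omega⟩ ⟨(j:ℕ), by omega⟩).det := by
    rw [det_split₂₁ (t := m) (u := t+1)]
    · have hTL : (Matrix.of fun p q : Fin m =>
          (((U.submatrix id σ)).submatrix f f) (Fin.castAdd _ p) (Fin.castAdd _ q))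
          = (1 : Matrix (Fin m) (Fin m) K) := by
        ext p q
        simp only [Matrix.of_apply, Matrix.submatrix_apply, id_eq, hU]
        have hv : ((σ (f (Fin.castAdd (t+1) q)) : Fin (m + t + 1)):ℕ) = (q:ℕ) + (t+1) := by
          rw [hσval, hf]
          simp only [Fin.coe_castAdd]
          exact Nat.mod_eq_of_lt (by omega)
        rw [dif_neg (by omega)]
        simp only [Matrix.one_apply]
        by_cases hpq : p = q
        · rw [if_pos (by rw [hv, hf]; simp only [Fin.coe_castAdd]; omega), if_pos hpq]
        · rw [if_neg (fun hc => hpq (by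
            rw [hv, hf] at hc
            simp only [Fin.coe_castAdd] at hc
            exact Fin.ext (by omega))), if_neg hpq]
      rw [hTL, Matrix.det_one, one_mul]
      congr 1
      ext p q
      simp only [Matrix.of_apply, Matrix.submatrix_apply, id_eq, hU]
      have hv : ((σ (f (Fin.natAdd m q)) : Fin (m + t + 1)):ℕ) = (q:ℕ) := by
        rw [hσval, hf]
        simp only [Fin.coe_natAdd]
        rw [show m + (q:ℕ) + (t+1) = (q:ℕ) + (m + t + 1) by omega, Nat.add_mod_right]
        exact Nat.mod_eq_of_lt (by omega)
      rw [dif_pos (by omega : ((σ (f (Fin.natAdd m q)) : Fin (m + t + 1)):ℕ) < t+1)]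
      congr 1 <;> rw [Fin.ext_iff] <;> simp only [hf, Fin.coe_natAdd, Fin.val_mk, hv] <;> omega
    · intro p q hp hq
      simp only [Matrix.of_apply, Matrix.submatrix_apply, id_eq, hU]
      have hv : ((σ (f q) : Fin (m + t + 1)):ℕ) = (q:ℕ) + (t+1) := by
        rw [hσval, hf]
        exact Nat.mod_eq_of_lt (by omega)
      rw [dif_neg (by omega)]
      rw [if_neg (by rw [hf]; omega)]
  -- Step 4 : signs and assembly
  have hsign : ((Equiv.Perm.sign σ : ℤ) : K) = (-1:K)^(m * (t+1)) := by
    rw [hσ, map_pow, sign_finRotate]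
    push_cast
    rw [← pow_mul]
    rw [show (m + t) * (t+1) = m * (t+1) + t * (t+1) by ring, pow_add,
      (Nat.even_mul_succ_self t).neg_one_pow, mul_one]
  have hperm := Matrix.det_permute' σ U
  have h5 : (A * U).det = A.det * U.det := Matrix.det_mul A U
  rw [hdetAU, hdet, one_mul] at h5
  rw [← hdetU, Matrix.det_submatrix_equiv_self, hperm, ← h5, hsign]






variable {h k : ℕ}

section colrel
variable (hh : 0 < h) (hk : 0 < k)
  (hD1 : ∀ a b : ℤ, b ≤ a → a ≤ b + h → D C k a b = 1)
  (hD0 : ∀ a b : ℤ, b < a → a < b + h → D C (k+1) a b = 0)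

include hh hk hD1 hD0 in
lemma backRel (c : ℤ) : ∃ v : ℕ → K, ∀ r : ℤ, c + 1 ≤ r → r ≤ c + h + k - 1 →
    C r c = ∑ i : Fin k, v (i:ℕ) * C r (c + 1 + (i:ℕ)) := by
  classical
  obtain ⟨k', rfl⟩ : ∃ k', k = k' + 1 := ⟨k - 1, by omega⟩
  set T : Matrix (Fin (k'+1)) (Fin (k'+1)) K :=
    Matrix.of fun i j => C (c + 1 + (i:ℕ)) (c + (j:ℕ)) with hT
  have hdetT : T.det = 1 := hD1 (c+1) c (by omega) (by omega)
  have hTunit : IsUnit T.det := by rw [hdetT]; exact isUnit_one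
  set w : Fin (k'+1) → K := fun i => C (c + 1 + (i:ℕ)) (c + ((k'+1:ℕ):ℤ)) with hw
  set u : Fin (k'+1) → K := T⁻¹ *ᵥ w with hu
  have hTu : T *ᵥ u = w := by
    rw [hu, Matrix.mulVec_mulVec, Matrix.mul_nonsing_inv _ hTunit, Matrix.one_mulVec]
  have base : ∀ i : Fin (k'+1), C (c + 1 + (i:ℕ)) (c + ((k'+1:ℕ):ℤ))
      = ∑ j : Fin (k'+1), u j * C (c + 1 + (i:ℕ)) (c + (j:ℕ)) := by
    intro i
    have h1 := congrFun hTu i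
    simp only [Matrix.mulVec, dotProduct, hT, Matrix.of_apply, hw] at h1
    rw [← h1]
    exact Finset.sum_congr rfl (fun j _ => mul_comm _ _)
  -- extension by strong induction
  have main : ∀ d : ℕ, (d:ℤ) ≤ (h:ℤ) + (k'+1) - 2 → C (c + 1 + (d:ℕ)) (c + ((k'+1:ℕ):ℤ))
      = ∑ j : Fin (k'+1), u j * C (c + 1 + (d:ℕ)) (c + (j:ℕ)) := by
    intro d
    induction d using Nat.strong_induction_on with
    | _ d IH =>
      intro hd
      by_cases hdk : d < k' + 1
      · have hb := base ⟨d, hdk⟩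
        simpa using hb
      · push_neg at hdk
        set a : ℤ := c + 1 + (d:ℤ) - (k'+1) with ha
        have hca : c < a := by omega
        have hac : a < c + h := by push_cast at hd ⊢; omega
        set S : Matrix (Fin (k'+1+1)) (Fin (k'+1+1)) K :=
          Matrix.of fun i j => C (a + (i:ℕ)) (c + (j:ℕ)) with hS
        have hdetS : S.det = 0 := hD0 a c hca hac
        obtain ⟨w', hw'0, hw'⟩ := Matrix.exists_mulVec_eq_zero_iff.mpr hdetS
        set wl := w' (Fin.last (k'+1)) with hwl
        have hrow : ∀ i : Fin (k'+1+1),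
            (∑ j : Fin (k'+1), C (a + (i:ℕ)) (c + (j:ℕ)) * w' j.castSucc)
              + C (a + (i:ℕ)) (c + ((k'+1:ℕ):ℤ)) * wl = 0 := by
          intro i
          have h2 := congrFun hw' i
          simp only [Matrix.mulVec, dotProduct, hS, Matrix.of_apply, Pi.zero_apply] at h2
          rw [Fin.sum_univ_castSucc] at h2
          simpa using h2
        set M2 : Matrix (Fin (k'+1)) (Fin (k'+1)) K :=
          Matrix.of fun i j => C (a + (i:ℕ)) (c + (j:ℕ)) with hM2
        have hdetM2 : M2.det = 1 := hD1 a c (by omega) (by omega)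
        have hM2unit : IsUnit M2.det := by rw [hdetM2]; exact isUnit_one
        have hwlne : wl ≠ 0 := by
          intro h0
          have hker : M2 *ᵥ (fun j => w' j.castSucc) = 0 := by
            funext i
            have h3 := hrow i.castSucc
            rw [h0, mul_zero, add_zero] at h3
            simp only [Matrix.mulVec, dotProduct, hM2, Matrix.of_apply, Pi.zero_apply]
            simpa using h3
          have hne : (fun j : Fin (k'+1) => w' j.castSucc) ≠ 0 := by
            intro hz
            apply hw'0
            funext j
            rcases Fin.eq_castSucc_or_eq_last j with ⟨j', rfl⟩ | rfl
            · exact congrFun hz j'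
            · exact h0
          have hd2 := Matrix.exists_mulVec_eq_zero_iff.mp ⟨_, hne, hker⟩
          rw [hdetM2] at hd2
          exact one_ne_zero hd2
        set u' : Fin (k'+1) → K := fun j => -(w' j.castSucc) / wl with hu'
        have hrel : ∀ i : Fin (k'+1+1), C (a + (i:ℕ)) (c + ((k'+1:ℕ):ℤ))
            = ∑ j : Fin (k'+1), u' j * C (a + (i:ℕ)) (c + (j:ℕ)) := by
          intro i
          have h2 := hrow i
          have h3 : ∑ j : Fin (k'+1), C (a + (i:ℕ)) (c + (j:ℕ)) * w' j.castSucc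
              = -(C (a + (i:ℕ)) (c + ((k'+1:ℕ):ℤ)) * wl) :=
            eq_neg_of_add_eq_zero_left h2
          calc C (a + (i:ℕ)) (c + ((k'+1:ℕ):ℤ))
              = (-(C (a + (i:ℕ)) (c + ((k'+1:ℕ):ℤ)) * wl)) * (-wl⁻¹) := by
                field_simp
            _ = (∑ j : Fin (k'+1), C (a + (i:ℕ)) (c + (j:ℕ)) * w' j.castSucc) * (-wl⁻¹) := by
                rw [h3]
            _ = ∑ j : Fin (k'+1), u' j * C (a + (i:ℕ)) (c + (j:ℕ)) := by
                rw [Finset.sum_mul]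
                refine Finset.sum_congr rfl (fun j _ => ?_)
                simp only [hu', div_eq_mul_inv]
                ring
        have hTu2 : M2 *ᵥ u = fun i : Fin (k'+1) => C (a + (i:ℕ)) (c + ((k'+1:ℕ):ℤ)) := by
          funext i
          have harg : c + 1 + ((d - (k'+1) + (i:ℕ) : ℕ):ℤ) = a + (i:ℕ) := by
            push_cast
            omega
          have hi := IH (d - (k'+1) + (i:ℕ)) (by omega) (by push_cast; push_cast at hd; omega)
          rw [harg] at hi
          simp only [Matrix.mulVec, dotProduct, hM2, Matrix.of_apply]
          rw [hi]
          exact Finset.sum_congr rfl (fun j _ => mul_comm _ _)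
        have hTu2' : M2 *ᵥ u' = fun i : Fin (k'+1) => C (a + (i:ℕ)) (c + ((k'+1:ℕ):ℤ)) := by
          funext i
          have hi := hrel i.castSucc
          simp only [Fin.coe_castSucc] at hi
          simp only [Matrix.mulVec, dotProduct, hM2, Matrix.of_apply]
          rw [hi]
          exact Finset.sum_congr rfl (fun j _ => mul_comm _ _)
        have huu : u = u' := by
          have h6 : M2 *ᵥ u = M2 *ᵥ u' := hTu2.trans hTu2'.symm
          have h7 := congrArg (fun z => M2⁻¹ *ᵥ z) h6
          simpa only [Matrix.mulVec_mulVec, Matrix.nonsing_inv_mul _ hM2unit,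
            Matrix.one_mulVec] using h7
        have h8 := hrel (Fin.last (k'+1))
        rw [← huu] at h8
        have harg2 : a + ((Fin.last (k'+1) : Fin (k'+1+1)):ℕ) = c + 1 + (d:ℕ) := by
          simp only [Fin.val_last]
          push_cast
          omega
        rw [harg2] at h8
        exact h8
  -- leading coefficient is nonzero
  have hu0 : u 0 ≠ 0 := by
    intro h0
    set G : Matrix (Fin (k'+1)) (Fin (k'+1)) K :=
      Matrix.of fun i j => C (c + 1 + (i:ℕ)) (c + 1 + (j:ℕ)) with hG
    have hdetG : G.det = 1 := hD1 (c+1) (c+1) le_rfl (by omega)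
    set z : Fin (k'+1) → K :=
      fun j => if hj : (j:ℕ) < k' then u ⟨(j:ℕ)+1, by omega⟩ else -1 with hz
    have hzne : z ≠ 0 := by
      intro hz0
      have h9 := congrFun hz0 (Fin.last k')
      simp only [hz, Fin.val_last, lt_self_iff_false, dif_neg, not_false_iff,
        Pi.zero_apply] at h9
      exact absurd h9 (by norm_num)
    have hker : G *ᵥ z = 0 := by
      funext i
      simp only [Matrix.mulVec, dotProduct, hG, Matrix.of_apply, Pi.zero_apply]
      have hbase := main (i:ℕ) (by push_cast; omega)
      rw [Fin.sum_univ_succ] at hbase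
      rw [h0, zero_mul, zero_add] at hbase
      have e2 : ∀ j : Fin k', c + (((j.succ : Fin (k'+1)):ℕ):ℤ) = c + 1 + ((j:ℕ):ℤ) := by
        intro j
        simp only [Fin.val_succ]
        push_cast
        ring
      rw [Fin.sum_univ_castSucc]
      have hzlast : z (Fin.last k') = -1 := by
        simp only [hz, Fin.val_last, lt_self_iff_false, dif_neg, not_false_iff]
      have hzcast : ∀ j : Fin k', z j.castSucc = u j.succ := by
        intro j
        simp only [hz]
        rw [dif_pos (show ((j.castSucc : Fin (k'+1)):ℕ) < k' by simpa using j.isLt)]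
        exact congrArg u (Fin.ext (by simp))
      have e3 : c + 1 + ((k':ℕ):ℤ) = c + ((k'+1:ℕ):ℤ) := by push_cast; ring
      simp only [Fin.coe_castSucc, Fin.val_last]
      rw [show (∑ j : Fin k', C (c + 1 + (i:ℕ)) (c + 1 + (j:ℕ)) * z j.castSucc)
          = ∑ j : Fin k', u j.succ * C (c + 1 + (i:ℕ)) (c + (((j.succ : Fin (k'+1)):ℕ):ℤ)) from
        Finset.sum_congr rfl (fun j _ => by rw [hzcast j, e2 j]; ring)]
      rw [hzlast, e3, ← hbase]
      ring
    have hd3 := Matrix.exists_mulVec_eq_zero_iff.mp ⟨z, hzne, hker⟩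
    rw [hdetG] at hd3
    exact one_ne_zero hd3
  -- construct the backward relation
  set v : ℕ → K := fun t => if ht : t < k' then -(u ⟨t+1, Nat.succ_lt_succ ht⟩) / u 0
    else (u 0)⁻¹ with hv
  refine ⟨v, ?_⟩
  intro r hr1 hr2
  obtain ⟨d, rfl, hd2⟩ : ∃ d : ℕ, r = c + 1 + (d:ℕ) ∧ (d:ℤ) ≤ (h:ℤ) + (k'+1) - 2 := by
    refine ⟨(r - c - 1).toNat, by omega, by omega⟩
  have hm := main d hd2
  rw [Fin.sum_univ_succ] at hm
  have e2 : ∀ j : Fin k', c + (((j.succ : Fin (k'+1)):ℕ):ℤ) = c + 1 + ((j:ℕ):ℤ) := by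
    intro j; simp only [Fin.val_succ]; push_cast; ring
  simp only [e2, Fin.val_zero, Nat.cast_zero, add_zero] at hm
  have hvcast : ∀ j : Fin k', v (j:ℕ) = -(u j.succ) / u 0 := by
    intro j
    simp only [hv]
    rw [dif_pos j.isLt]
    exact congrArg (fun x => -(u x) / u 0) (Fin.ext (by simp))
  have hvlast : v k' = (u 0)⁻¹ := by
    simp only [hv]
    rw [dif_neg (lt_irrefl k')]
  rw [Fin.sum_univ_castSucc]
  simp only [Fin.coe_castSucc, Fin.val_last]
  rw [show (∑ j : Fin k', v (j:ℕ) * C (c + 1 + (d:ℕ)) (c + 1 + ((j:ℕ):ℤ)))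
      = ∑ j : Fin k', (-(u j.succ) / u 0) * C (c + 1 + (d:ℕ)) (c + 1 + ((j:ℕ):ℤ)) from
    Finset.sum_congr rfl (fun j _ => by rw [hvcast j]), hvlast]
  have e7 : (∑ j : Fin k', (-(u j.succ) / u 0) * C (c + 1 + (d:ℕ)) (c + 1 + ((j:ℕ):ℤ)))
      = -(∑ j : Fin k', u j.succ * C (c + 1 + (d:ℕ)) (c + 1 + ((j:ℕ):ℤ))) / u 0 := by
    rw [neg_div, Finset.sum_div, ← Finset.sum_neg_distrib]
    exact Finset.sum_congr rfl (fun j _ => by ring)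
  have e6 : c + 1 + ((k':ℕ):ℤ) = c + ((k'+1:ℕ):ℤ) := by push_cast; ring
  rw [e7, e6, hm]
  field_simp
  ring

include hh hk hD1 hD0 in
lemma Dvanish (s : ℕ) (b : ℤ) (hs1 : k < s) (hs2 : (s:ℤ) ≤ (h:ℤ) + k - 1) :
    D C s (b+1) b = 0 := by
  classical
  obtain ⟨v, hv⟩ := backRel hh hk hD1 hD0 b
  obtain ⟨s', rfl⟩ : ∃ s', s = s' + 1 := ⟨s - 1, by omega⟩
  have hks : k ≤ s' := by omega
  set z : Fin (s'+1) → K := fun j =>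
    if (j:ℕ) = 0 then 1 else if (j:ℕ) ≤ k then -(v ((j:ℕ)-1)) else 0 with hz
  have hzne : z ≠ 0 := by
    intro h0
    have h1 := congrFun h0 0
    simp only [hz, Fin.val_zero, if_pos rfl, Pi.zero_apply] at h1
    exact one_ne_zero h1
  apply Matrix.exists_mulVec_eq_zero_iff.mp
  refine ⟨z, hzne, ?_⟩
  funext i
  simp only [Matrix.mulVec, dotProduct, Matrix.of_apply, Pi.zero_apply]
  rw [Fin.sum_univ_succ]
  have hz0 : z 0 = 1 := by simp [hz]
  set g : ℕ → K := fun t => C (b + 1 + (i:ℕ)) (b + 1 + (t:ℤ)) * (if t < k then -(v t) else 0)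
    with hg
  have hterm : ∀ j : Fin s',
      C (b + 1 + (i:ℕ)) (b + (((j.succ : Fin (s'+1)):ℕ):ℤ)) * z j.succ = g (j:ℕ) := by
    intro j
    have harg : b + (((j.succ : Fin (s'+1)):ℕ):ℤ) = b + 1 + ((j:ℕ):ℤ) := by
      simp only [Fin.val_succ]; push_cast; ring
    have hzsucc : z j.succ = if (j:ℕ) < k then -(v (j:ℕ)) else 0 := by
      simp only [hz, Fin.val_succ]
      rw [if_neg (by omega)]
      by_cases hjk : (j:ℕ) < k
      · rw [if_pos (by omega), if_pos hjk]
        simp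
      · rw [if_neg (by omega), if_neg hjk]
    rw [harg, hzsucc, hg]
  rw [Finset.sum_congr rfl (fun j _ => hterm j)]
  rw [Fin.sum_univ_eq_sum_range g s']
  rw [← Finset.sum_subset (Finset.range_subset_range.mpr hks)
    (fun x _ hx => by
      simp only [hg]
      rw [if_neg (by simp only [Finset.mem_range] at hx; omega), mul_zero])]
  have hsum : ∑ t ∈ Finset.range k, g t
      = -(∑ t ∈ Finset.range k, v t * C (b + 1 + (i:ℕ)) (b + 1 + (t:ℤ))) := by
    rw [← Finset.sum_neg_distrib]
    refine Finset.sum_congr rfl (fun t ht => ?_)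
    simp only [hg]
    rw [if_pos (Finset.mem_range.mp ht)]
    ring
  rw [hsum]
  have hback := hv (b + 1 + (i:ℕ)) (by omega) (by have := i.isLt; push_cast at hs2 ⊢; omega)
  rw [← Fin.sum_univ_eq_sum_range (fun t => v t * C (b + 1 + (i:ℕ)) (b + 1 + (t:ℤ))) k]
  simp only [Fin.val_zero, Nat.cast_zero, add_zero, hz0, mul_one]
  rw [hback]
  ring

end colrel

lemma upperUni_det' {C : ℤ → ℤ → K} {h : ℕ} (hdh : ∀ a : ℤ, C (a + h) a = 1)
    (hgt : ∀ a b : ℤ, b + (h:ℤ) < a → C a b = 0) (s : ℕ) (x : ℤ)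
    (M : Matrix (Fin s) (Fin s) K)
    (hM : ∀ p q : Fin s, ∃ x' y' : ℤ, M p q = C x' y' ∧ x' - (x + h) = p ∧ y' - x = q) :
    M.det = 1 := by
  apply det_upperUni
  · intro p q hqp
    obtain ⟨x', y', hM', hx', hy'⟩ := hM p q
    rw [hM']
    exact hgt _ _ (by omega)
  · intro p
    obtain ⟨x', y', hM', hx', hy'⟩ := hM p p
    rw [hM', show x' = y' + (h:ℤ) by omega]
    exact hdh y'

lemma signdet (t m0 : ℕ) (M : Matrix (Fin t) (Fin t) K) :
    (Matrix.of fun i j : Fin t => (-1:K)^(m0 + (i:ℕ) + (j:ℕ)) * M i j).det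
      = (-1:K)^(m0*t) * M.det := by
  have hfac : (Matrix.of fun i j : Fin t => (-1:K)^(m0 + (i:ℕ) + (j:ℕ)) * M i j)
      = (Matrix.diagonal fun i : Fin t => (-1:K)^(m0 + (i:ℕ))) * M *
        (Matrix.diagonal fun j : Fin t => (-1:K)^((j:ℕ))) := by
    ext i j
    rw [Matrix.mul_diagonal, Matrix.diagonal_mul, Matrix.of_apply, pow_add]
    ring
  rw [hfac, Matrix.det_mul, Matrix.det_mul, Matrix.det_diagonal, Matrix.det_diagonal]
  rw [Finset.prod_pow_eq_pow_sum, Finset.prod_pow_eq_pow_sum]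
  have h1 : ∑ i : Fin t, (m0 + (i:ℕ)) = m0 * t + ∑ i : Fin t, (i:ℕ) := by
    rw [Finset.sum_add_distrib, Finset.sum_const, Finset.card_univ, Fintype.card_fin,
      smul_eq_mul]
    ring
  rw [h1, pow_add]
  have h2 : (-1:K)^(∑ i : Fin t, (i:ℕ)) * (-1:K)^(∑ i : Fin t, (i:ℕ)) = 1 := by
    rw [← pow_add]
    exact Even.neg_one_pow ⟨_, rfl⟩
  calc (-1:K)^(m0*t) * (-1:K)^(∑ i : Fin t, (i:ℕ)) * M.det * (-1:K)^(∑ i : Fin t, (i:ℕ))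
      = (-1:K)^(m0*t) * M.det
        * ((-1:K)^(∑ i : Fin t, (i:ℕ)) * (-1:K)^(∑ i : Fin t, (i:ℕ))) := by ring
    _ = (-1:K)^(m0*t) * M.det := by rw [h2, mul_one]

lemma truncDual_apply (m : ℕ) (C0 : ℤ → ℤ → K) (a b : ℤ) (h1 : b ≤ a) (h2 : a < b + m) :
    truncDual m C0 a b = D C0 ((a - b).toNat) (b + 1) b := by
  simp only [truncDual]
  rw [if_pos ⟨h1, h2⟩]
  have hs : (((a - b).toNat : ℕ) : ℤ) = a - b := Int.toNat_of_nonneg (by omega)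
  have e1 : Finset.Icc (b + 1) a
      = Finset.Icc (b + 1) ((b + 1) + ((a - b).toNat : ℤ) - 1) := by
    rw [hs]; congr 1; omega
  have e2 : Finset.Icc b (a - 1) = Finset.Icc b (b + ((a - b).toNat : ℤ) - 1) := by
    rw [hs]; congr 1; omega
  rw [e1, e2, minor_eq]

end FriezeDual

open FriezeDual in
/-- **Duality for `SL(k)`-friezes.** If `C` is an `SL(k)`-frieze of height `h`, then
its `(h+k)`-truncated dual `C†` is an `SL(h)`-frieze of height `k`, and the
`(h+k)`-truncated dual of `C†` equals `C`.  Hence taking `(h+k)`-truncated duals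
defines mutually inverse bijections between `SL(k)`-friezes of height `h` and
`SL(h)`-friezes of height `k`. -/
theorem slFrieze_truncDual (k h : ℕ) (hk : 0 < k) (hh : 0 < h)
    (C : ℤ → ℤ → K) (hC : IsSLFrieze k h C) :
    IsSLFrieze h k (truncDual (h + k) C) ∧
      truncDual (h + k) (truncDual (h + k) C) = C := by
  obtain ⟨⟨hd, hdh, hz⟩, h1m, h0m⟩ := hC
  have hlt : ∀ a b : ℤ, a < b → C a b = 0 := fun a b hab => hz a b (Or.inl hab)
  have hgt : ∀ a b : ℤ, b + (h:ℤ) < a → C a b = 0 := fun a b hab => hz a b (Or.inr hab)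
  have hD1 : ∀ a b : ℤ, b ≤ a → a ≤ b + (h:ℤ) → D C k a b = 1 := by
    intro a b hba hab
    rw [← minor_eq C a b k]
    exact h1m a b hba hab
  have hD0 : ∀ a b : ℤ, b < a → a < b + (h:ℤ) → D C (k+1) a b = 0 := by
    intro a b hba hab
    have h5 := h0m a b hba hab
    rw [show (a + (k:ℤ)) = a + ((k+1:ℕ):ℤ) - 1 by push_cast; ring,
      show (b + (k:ℤ)) = b + ((k+1:ℕ):ℤ) - 1 by push_cast; ring, minor_eq] at h5
    exact h5
  have bridge : ∀ (b : ℤ) (N : ℕ), N ≤ h + k → ∀ i j : Fin N,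
      truncDual (h+k) C (b + ((i:ℕ):ℤ)) (b + ((j:ℕ):ℤ))
        = (-1:K)^((i:ℕ)+(j:ℕ)) * Wd C b N i j := by
    intro b N hN i j
    rw [Wd]
    simp only [Matrix.of_apply]
    rw [← mul_assoc, ← pow_add, Even.neg_one_pow ⟨(i:ℕ)+(j:ℕ), rfl⟩, one_mul]
    by_cases hji : (j:ℕ) ≤ (i:ℕ)
    · rw [if_pos hji]
      rw [truncDual_apply (h+k) C _ _ (by omega)
        (by have := i.isLt; push_cast; omega)]
      congr 1
      omega
    · rw [if_neg hji]
      simp only [truncDual]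
      rw [if_neg (by intro hcc; exact hji (by have := hcc.1; omega))]
  refine ⟨⟨⟨?_, ?_, ?_⟩, ?_, ?_⟩, ?_⟩
  · -- diagonal ones
    intro a
    rw [truncDual_apply (h+k) C a a le_rfl (by push_cast; omega)]
    rw [show (a - a).toNat = 0 by omega]
    exact Matrix.det_fin_zero
  · -- shifted ones
    intro a
    rw [truncDual_apply (h+k) C (a + (k:ℕ)) a (by omega) (by push_cast; omega)]
    rw [show ((a + (k:ℕ)) - a).toNat = k by omega]
    exact hD1 (a + 1) a (by omega) (by omega)
  · -- zeroes
    intro a b hab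
    rcases hab with hab | hab
    · simp only [truncDual]
      rw [if_neg (by intro hcc; have := hcc.1; omega)]
    · by_cases hbig : a < b + ((h:ℤ) + k)
      · rw [truncDual_apply (h+k) C a b (by omega) (by push_cast at hbig ⊢; omega)]
        exact Dvanish hh hk hD1 hD0 _ b (by omega) (by push_cast at hbig ⊢; omega)
      · simp only [truncDual]
        rw [if_neg (by intro hcc; have := hcc.2; push_cast at this; omega)]
  · -- SL1 minors
    intro a b hba hab
    obtain ⟨t, rfl⟩ : ∃ t, h = t + 1 := ⟨h - 1, by omega⟩
    rw [minor_eq]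
    set m := (a - b).toNat with hm
    have hmab : ((m:ℕ):ℤ) = a - b := Int.toNat_of_nonneg (by omega)
    have hmk : m ≤ k := by omega
    set N := m + t + 1 with hN
    have hmul := Wmat_mul_Wd hd hlt b N
    have hdetW := det_Wmat hd hlt b N
    have jc := jacobi_corner (Wmat C b N) (Wd C b N) hmul hdetW
    show (Matrix.of fun i j : Fin (t+1) =>
      truncDual ((t+1)+k) C (a + ((i:ℕ):ℤ)) (b + ((j:ℕ):ℤ))).det = 1
    have hstep : (Matrix.of fun i j : Fin (t+1) =>
        truncDual ((t+1)+k) C (a + ((i:ℕ):ℤ)) (b + ((j:ℕ):ℤ)))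
        = Matrix.of fun i j : Fin (t+1) => (-1:K)^(m + (i:ℕ) + (j:ℕ)) *
            (Matrix.of fun i' j' : Fin (t+1) =>
              Wd C b N ⟨m + (i':ℕ), by have := i'.isLt; omega⟩
                ⟨(j':ℕ), by have := j'.isLt; omega⟩) i j := by
      ext i j
      simp only [Matrix.of_apply]
      have hb2 := bridge b N (by omega) ⟨m + (i:ℕ), by have := i.isLt; omega⟩
        ⟨(j:ℕ), by have := j.isLt; omega⟩
      simp only [Fin.val_mk] at hb2
      rw [show a + ((i:ℕ):ℤ) = b + (((m + (i:ℕ) : ℕ)):ℤ) by push_cast; omega]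
      rw [hb2]
    rw [hstep, signdet, jc]
    have hY : (Matrix.of fun i j : Fin m =>
        Wmat C b N ⟨(t+1) + (i:ℕ), by have := i.isLt; omega⟩
          ⟨(j:ℕ), by have := j.isLt; omega⟩).det = 1 := by
      apply upperUni_det' hdh hgt m b
      intro p q
      refine ⟨b + (((t+1) + (p:ℕ) : ℕ):ℤ), b + ((q:ℕ):ℤ), rfl, by push_cast; omega,
        by push_cast; omega⟩
    rw [hY, mul_one, ← pow_add]
    exact Even.neg_one_pow ⟨m*(t+1), rfl⟩
  · -- SL0 minors
    intro a b hba hab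
    rw [show (a + (h:ℤ)) = a + ((h+1:ℕ):ℤ) - 1 by push_cast; ring,
      show (b + (h:ℤ)) = b + ((h+1:ℕ):ℤ) - 1 by push_cast; ring, minor_eq]
    set m := (a - b).toNat with hm
    have hmab : ((m:ℕ):ℤ) = a - b := Int.toNat_of_nonneg (by omega)
    have hm1 : 1 ≤ m := by omega
    have hmk : m + 1 ≤ k := by omega
    set N := m + h + 1 with hN
    have hmul := Wmat_mul_Wd hd hlt b N
    have hdetW := det_Wmat hd hlt b N
    have jc := jacobi_corner (Wmat C b N) (Wd C b N) hmul hdetW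
    show (Matrix.of fun i j : Fin (h+1) =>
      truncDual (h+k) C (a + ((i:ℕ):ℤ)) (b + ((j:ℕ):ℤ))).det = 0
    have hstep : (Matrix.of fun i j : Fin (h+1) =>
        truncDual (h+k) C (a + ((i:ℕ):ℤ)) (b + ((j:ℕ):ℤ)))
        = Matrix.of fun i j : Fin (h+1) => (-1:K)^(m + (i:ℕ) + (j:ℕ)) *
            (Matrix.of fun i' j' : Fin (h+1) =>
              Wd C b N ⟨m + (i':ℕ), by have := i'.isLt; omega⟩
                ⟨(j':ℕ), by have := j'.isLt; omega⟩) i j := by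
      ext i j
      simp only [Matrix.of_apply]
      have hb2 := bridge b N (by omega) ⟨m + (i:ℕ), by have := i.isLt; omega⟩
        ⟨(j:ℕ), by have := j.isLt; omega⟩
      simp only [Fin.val_mk] at hb2
      rw [show a + ((i:ℕ):ℤ) = b + (((m + (i:ℕ) : ℕ)):ℤ) by push_cast; omega]
      rw [hb2]
    rw [hstep, signdet, jc]
    have hY : (Matrix.of fun i j : Fin m =>
        Wmat C b N ⟨(h+1) + (i:ℕ), by have := i.isLt; omega⟩
          ⟨(j:ℕ), by have := j.isLt; omega⟩).det = 0 := by
      apply Matrix.det_eq_zero_of_column_eq_zero ⟨0, by omega⟩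
      intro i
      simp only [Matrix.of_apply, Wmat, Fin.val_mk]
      apply hgt
      push_cast
      omega
    rw [hY, mul_zero, mul_zero]
  · -- double dual
    funext a b
    by_cases hcase : b ≤ a ∧ a < b + ((h+k : ℕ):ℤ)
    · obtain ⟨hba, hab⟩ := hcase
      rw [truncDual_apply (h+k) (truncDual (h+k) C) a b hba hab]
      rcases Nat.eq_zero_or_pos ((a-b).toNat) with hs0 | hspos
      · have hab' : a = b := by omega
        subst hab'
        rw [show (a - a).toNat = 0 by omega, hd a]
        exact Matrix.det_fin_zero
      · obtain ⟨s', hs⟩ : ∃ s', (a - b).toNat = s' + 1 := ⟨(a-b).toNat - 1, by omega⟩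
        rw [hs]
        have hsab : a = b + (s' + 1 : ℕ) := by omega
        set N := 1 + s' + 1 with hN
        have hmul := Wmat_mul_Wd hd hlt b N
        have hdetW := det_Wmat hd hlt b N
        have jc := jacobi_corner (Wmat C b N) (Wd C b N) hmul hdetW
        show (Matrix.of fun i j : Fin (s'+1) =>
          truncDual (h+k) C ((b+1) + ((i:ℕ):ℤ)) (b + ((j:ℕ):ℤ))).det = C a b
        have hstep : (Matrix.of fun i j : Fin (s'+1) =>
            truncDual (h+k) C ((b+1) + ((i:ℕ):ℤ)) (b + ((j:ℕ):ℤ)))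
            = Matrix.of fun i j : Fin (s'+1) => (-1:K)^(1 + (i:ℕ) + (j:ℕ)) *
                (Matrix.of fun i' j' : Fin (s'+1) =>
                  Wd C b N ⟨1 + (i':ℕ), by have := i'.isLt; omega⟩
                    ⟨(j':ℕ), by have := j'.isLt; omega⟩) i j := by
          ext i j
          simp only [Matrix.of_apply]
          have hb2 := bridge b N (by omega) ⟨1 + (i:ℕ), by have := i.isLt; omega⟩
            ⟨(j:ℕ), by have := j.isLt; omega⟩
          simp only [Fin.val_mk] at hb2
          rw [show (b+1) + ((i:ℕ):ℤ) = b + (((1 + (i:ℕ) : ℕ)):ℤ) by push_cast; ring]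
          rw [hb2]
        rw [hstep, signdet, jc]
        have hY : (Matrix.of fun i j : Fin 1 =>
            Wmat C b N ⟨(s'+1) + (i:ℕ), by have := i.isLt; omega⟩
              ⟨(j:ℕ), by have := j.isLt; omega⟩).det = C a b := by
          rw [Matrix.det_fin_one]
          simp only [Matrix.of_apply, Wmat, Fin.val_mk, Fin.val_zero]
          congr 1
          · push_cast; omega
          · push_cast; omega
        rw [hY, ← mul_assoc, ← pow_add, Even.neg_one_pow ⟨1*(s'+1), rfl⟩, one_mul]
    · simp only [truncDual]
      rw [if_neg hcase]
      refine (hz a b ?_).symm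
      by_cases hc : a < b
      · exact Or.inl hc
      · right
        push_neg at hcase hc
        have h6 := hcase hc
        push_cast at h6 ⊢
        omega
end

section
/- Let n, h be integers with 0 < h < n and let π be the uniform juggling function of period n defined by π(a) := a + h for all a ∈ ℤ (which has h balls). Then: (1) a ℤ×ℤ matrix C over a field 𝕜 is a π-prefrieze if and only if it is a prefrieze of height h; and (2) C is a π-frieze if and only if it is an SL(n−h)-frieze of height h. -/
open Finset

variable {K : Type*} [Field K]

/-- A juggling function of period `n`: a bijection `π : ℤ → ℤ` with
`i ≤ π i ≤ i + n` and `π (i + n) = π i + n` for all `i`. -/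
structure IsJuggling (n : ℕ) (π : ℤ ≃ ℤ) : Prop where
  npos : 0 < n
  le_self : ∀ i : ℤ, i ≤ π i
  le_add : ∀ i : ℤ, π i ≤ i + n
  periodic : ∀ i : ℤ, π (i + n) = π i + n

/-- The juggling function `π` of period `n` has `h` balls. -/
def HasBalls (n : ℕ) (π : ℤ ≃ ℤ) (h : ℕ) : Prop :=
  ∑ i ∈ Finset.Icc (1 : ℤ) (n : ℤ), (π i - i) = (h : ℤ) * n

/-- The dual juggling function `π†`, `a ↦ π⁻¹ a + n`. -/
def dualJug (n : ℕ) (π : ℤ ≃ ℤ) : ℤ ≃ ℤ :=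
  π.symm.trans (Equiv.addRight (n : ℤ))

/-- A `π`-prefrieze: `C a b = 1` if `a = b`; `C a b = (-1)^|S_π(b,a)|` if `a = π b`;
and `C a b = 0` whenever `a ∉ [b, π b]` or `b ∉ [π⁻¹ a, a]`. -/
def IsPrefrieze (π : ℤ ≃ ℤ) (C : ℤ → ℤ → K) : Prop :=
  ∀ a b : ℤ,
    (a = b → C a b = 1) ∧
    (a = π b → C a b = (-1 : K) ^ Set.ncard {i : ℤ | b < i ∧ π i < a}) ∧
    (¬(b ≤ a ∧ a ≤ π b) ∨ ¬(π.symm a ≤ b ∧ b ≤ a) → C a b = 0)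

/-- A `π`-frieze: a `π`-prefrieze satisfying the frieze and tameness conditions. -/
def IsFrieze (n : ℕ) (π : ℤ ≃ ℤ) (C : ℤ → ℤ → K) : Prop :=
  IsPrefrieze π C ∧
  -- the frieze condition
  (∀ a b : ℤ, dualJug n π a ≤ b → b < a + n → a + n ≤ π b →
    minor C
      (Finset.Icc a b \ (Finset.Icc a b).filter (fun i => dualJug n π i ≤ b))
      (Finset.Icc a b \
        ((Finset.Icc a b).filter (fun i => dualJug n π i ≤ b)).image (dualJug n π)) = 1) ∧
  -- the tameness condition
  (∀ a b : ℤ, (dualJug n π a < b ∧ b < a + n) ∨ (b < a + n ∧ a + n < π b) →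
    minor C
      (Finset.Ioc a b \ (Finset.Ioo a b).filter (fun i => dualJug n π i < b))
      (Finset.Ico a b \
        ((Finset.Ioo a b).filter (fun i => dualJug n π i < b)).image (dualJug n π)) = 0)

section Aux

lemma dualJug_addRight (n h : ℕ) (i : ℤ) :
    dualJug n (Equiv.addRight (h : ℤ)) i = i - h + n := by
  simp [dualJug, sub_eq_add_neg]

lemma minor_diag_one (C : ℤ → ℤ → K) (h1 : ∀ a : ℤ, C a a = 1)
    (h0 : ∀ a b : ℤ, a < b → C a b = 0) (s : Finset ℤ) : minor C s s = 1 := by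
  rw [minor, dif_pos rfl, Matrix.det_of_lowerTriangular]
  · simp [h1]
  · intro i j hij
    exact h0 _ _ ((s.orderEmbOfFin rfl).strictMono hij)

end Aux

/-- **Uniform juggling functions recover `SL(k)`-friezes.** Let `0 < h < n` and let
`π` be the uniform juggling function of period `n` with `π a = a + h` (which has `h`
balls).  Then (1) a `ℤ×ℤ` matrix `C` is a `π`-prefrieze iff it is a prefrieze of
height `h`, and (2) `C` is a `π`-frieze iff it is an `SL(n-h)`-frieze of height `h`. -/
theorem uniform_frieze_iff_slFrieze (n h : ℕ) (hh : 0 < h) (hhn : h < n)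
    (C : ℤ → ℤ → K) :
    (IsPrefrieze (Equiv.addRight (h : ℤ)) C ↔ IsPrefriezeH h C) ∧
    (IsFrieze n (Equiv.addRight (h : ℤ)) C ↔ IsSLFrieze (n - h) h C) := by
  have hpart1 : IsPrefrieze (Equiv.addRight (h : ℤ)) C ↔ IsPrefriezeH h C := by
    constructor
    · intro hC
      refine ⟨fun a => (hC a a).1 rfl, fun a => ?_, fun a b hab => ?_⟩
      · have hset : {i : ℤ | a < i ∧ (Equiv.addRight (h : ℤ)) i < a + h} = ∅ := by
          ext i
          simp only [Equiv.coe_addRight, Set.mem_setOf_eq, Set.mem_empty_iff_false, iff_false,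
            not_and]
          omega
        have := (hC (a + h) a).2.1 (by simp)
        rwa [hset, Set.ncard_empty, pow_zero] at this
      · refine (hC a b).2.2 (Or.inl ?_)
        simp only [Equiv.coe_addRight]
        omega
    · intro hC a b
      refine ⟨fun hab => by rw [hab]; exact hC.1 b, fun hab => ?_, fun hab => ?_⟩
      · simp only [Equiv.coe_addRight] at hab
        subst hab
        have hset : {i : ℤ | b < i ∧ (Equiv.addRight (h : ℤ)) i < b + h} = ∅ := by
          ext i
          simp only [Equiv.coe_addRight, Set.mem_setOf_eq, Set.mem_empty_iff_false, iff_false,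
            not_and]
          omega
        rw [hset, Set.ncard_empty, pow_zero]
        exact hC.2.1 b
      · refine hC.2.2 a b ?_
        rcases hab with hab | hab <;>
          simp only [Equiv.coe_addRight, Equiv.addRight_symm, not_and, not_le] at hab <;> omega
  refine ⟨hpart1, ?_⟩
  have hk : ((n - h : ℕ) : ℤ) = (n : ℤ) - h := by omega
  constructor
  · rintro ⟨hpre, hfr, htame⟩
    have hpH := hpart1.mp hpre
    have h0 : ∀ a b : ℤ, a < b → C a b = 0 := fun a b hab => hpH.2.2 a b (Or.inl hab)
    refine ⟨hpH, ?_, ?_⟩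
    · intro a' b' h1 h2
      rcases eq_or_lt_of_le h1 with rfl | hd
      · exact minor_diag_one C hpH.1 h0 _
      · have key := hfr b' (a' + ((n : ℤ) - h) - 1)
          (by rw [dualJug_addRight]; omega) (by omega)
          (by simp only [Equiv.coe_addRight]; omega)
        have himg : ((Finset.Icc b' (a' + ((n : ℤ) - h) - 1)).filter
              (fun i => dualJug n (Equiv.addRight (h : ℤ)) i ≤ a' + ((n : ℤ) - h) - 1)).image
              (dualJug n (Equiv.addRight (h : ℤ)))
            = Finset.Icc (b' + ((n : ℤ) - h)) (a' + ((n : ℤ) - h) - 1) := by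
          ext x
          simp only [Finset.mem_image, Finset.mem_filter, Finset.mem_Icc, dualJug_addRight]
          constructor
          · rintro ⟨y, hy, rfl⟩; omega
          · intro hx; exact ⟨x - n + h, by omega, by omega⟩
        have hrow : Finset.Icc b' (a' + ((n : ℤ) - h) - 1) \
              (Finset.Icc b' (a' + ((n : ℤ) - h) - 1)).filter
              (fun i => dualJug n (Equiv.addRight (h : ℤ)) i ≤ a' + ((n : ℤ) - h) - 1)
            = Finset.Icc a' (a' + ((n - h : ℕ) : ℤ) - 1) := by
          ext x
          simp only [Finset.mem_sdiff, Finset.mem_filter, Finset.mem_Icc, dualJug_addRight,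
            not_and, not_le]
          omega
        have hcol : Finset.Icc b' (a' + ((n : ℤ) - h) - 1) \
              Finset.Icc (b' + ((n : ℤ) - h)) (a' + ((n : ℤ) - h) - 1)
            = Finset.Icc b' (b' + ((n - h : ℕ) : ℤ) - 1) := by
          ext x
          simp only [Finset.mem_sdiff, Finset.mem_Icc, not_and, not_le]
          omega
        rw [hrow, himg, hcol] at key
        exact key
    · intro a' b' h1 h2
      have key := htame b' (a' + ((n : ℤ) - h))
        (Or.inl ⟨by rw [dualJug_addRight]; omega, by omega⟩)
      have himg : ((Finset.Ioo b' (a' + ((n : ℤ) - h))).filter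
            (fun i => dualJug n (Equiv.addRight (h : ℤ)) i < a' + ((n : ℤ) - h))).image
            (dualJug n (Equiv.addRight (h : ℤ)))
          = Finset.Ioo (b' + ((n : ℤ) - h)) (a' + ((n : ℤ) - h)) := by
        ext x
        simp only [Finset.mem_image, Finset.mem_filter, Finset.mem_Ioo, dualJug_addRight]
        constructor
        · rintro ⟨y, hy, rfl⟩; omega
        · intro hx; exact ⟨x - n + h, by omega, by omega⟩
      have hrow : Finset.Ioc b' (a' + ((n : ℤ) - h)) \
            (Finset.Ioo b' (a' + ((n : ℤ) - h))).filter
            (fun i => dualJug n (Equiv.addRight (h : ℤ)) i < a' + ((n : ℤ) - h))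
          = Finset.Icc a' (a' + ((n - h : ℕ) : ℤ)) := by
        ext x
        simp only [Finset.mem_sdiff, Finset.mem_filter, Finset.mem_Ioc, Finset.mem_Ioo,
          Finset.mem_Icc, dualJug_addRight, not_and, not_lt]
        omega
      have hcol : Finset.Ico b' (a' + ((n : ℤ) - h)) \
            Finset.Ioo (b' + ((n : ℤ) - h)) (a' + ((n : ℤ) - h))
          = Finset.Icc b' (b' + ((n - h : ℕ) : ℤ)) := by
        ext x
        simp only [Finset.mem_sdiff, Finset.mem_Ico, Finset.mem_Ioo, Finset.mem_Icc, not_and,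
          not_lt]
        omega
      rw [hrow, himg, hcol] at key
      exact key
  · rintro ⟨hpH, hsl1, hsl2⟩
    refine ⟨hpart1.mpr hpH, ?_, ?_⟩
    · intro a b c1 c2 c3
      rw [dualJug_addRight] at c1
      simp only [Equiv.coe_addRight] at c3
      have himg : ((Finset.Icc a b).filter
            (fun i => dualJug n (Equiv.addRight (h : ℤ)) i ≤ b)).image
            (dualJug n (Equiv.addRight (h : ℤ)))
          = Finset.Icc (a + ((n : ℤ) - h)) b := by
        ext x
        simp only [Finset.mem_image, Finset.mem_filter, Finset.mem_Icc, dualJug_addRight]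
        constructor
        · rintro ⟨y, hy, rfl⟩; omega
        · intro hx; exact ⟨x - n + h, by omega, by omega⟩
      have hrow : Finset.Icc a b \ (Finset.Icc a b).filter
            (fun i => dualJug n (Equiv.addRight (h : ℤ)) i ≤ b)
          = Finset.Icc (b - ((n - h : ℕ) : ℤ) + 1) b := by
        ext x
        simp only [Finset.mem_sdiff, Finset.mem_filter, Finset.mem_Icc, dualJug_addRight,
          not_and, not_le]
        omega
      have hcol : Finset.Icc a b \ Finset.Icc (a + ((n : ℤ) - h)) b
          = Finset.Icc a (a + ((n - h : ℕ) : ℤ) - 1) := by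
        ext x
        simp only [Finset.mem_sdiff, Finset.mem_Icc, not_and, not_le]
        omega
      rw [hrow, himg, hcol]
      have key := hsl1 (b - ((n - h : ℕ) : ℤ) + 1) a (by omega) (by omega)
      rwa [show b - ((n - h : ℕ) : ℤ) + 1 + ((n - h : ℕ) : ℤ) - 1 = b by omega] at key
    · intro a b hab
      have hc : a + ((n : ℤ) - h) < b ∧ b < a + n := by
        rcases hab with ⟨h1, h2⟩ | ⟨h1, h2⟩
        · rw [dualJug_addRight] at h1; omega
        · simp only [Equiv.coe_addRight] at h2; omega
      have himg : ((Finset.Ioo a b).filter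
            (fun i => dualJug n (Equiv.addRight (h : ℤ)) i < b)).image
            (dualJug n (Equiv.addRight (h : ℤ)))
          = Finset.Ioo (a + ((n : ℤ) - h)) b := by
        ext x
        simp only [Finset.mem_image, Finset.mem_filter, Finset.mem_Ioo, dualJug_addRight]
        constructor
        · rintro ⟨y, hy, rfl⟩; omega
        · intro hx; exact ⟨x - n + h, by omega, by omega⟩
      have hrow : Finset.Ioc a b \ (Finset.Ioo a b).filter
            (fun i => dualJug n (Equiv.addRight (h : ℤ)) i < b)
          = Finset.Icc (b - ((n - h : ℕ) : ℤ)) b := by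
        ext x
        simp only [Finset.mem_sdiff, Finset.mem_filter, Finset.mem_Ioc, Finset.mem_Ioo,
          Finset.mem_Icc, dualJug_addRight, not_and, not_lt]
        omega
      have hcol : Finset.Ico a b \ Finset.Ioo (a + ((n : ℤ) - h)) b
          = Finset.Icc a (a + ((n - h : ℕ) : ℤ)) := by
        ext x
        simp only [Finset.mem_sdiff, Finset.mem_Ico, Finset.mem_Ioo, Finset.mem_Icc, not_and,
          not_lt]
        omega
      rw [hrow, himg, hcol]
      have key := hsl2 (b - ((n - h : ℕ) : ℤ)) a (by omega) (by omega)
      rwa [show b - ((n - h : ℕ) : ℤ) + ((n - h : ℕ) : ℤ) = b by omega] at key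
end

section
/- Let π be a juggling function and let C be a lower unitriangular ℤ×ℤ matrix over a field 𝕜 (i.e., C_{a,b} = 0 for a < b and C_{a,a} = 1 for all a). Then C is a π-prefrieze if and only if both of the following hold: (1) for all a < b, det(C_{π(S_π(a,b)), S_π(a,b)}) = 1; and (2) for all a < b such that a < π^{−1}(b) or π(a) < b, det(C_{π(S_π(a,b))∪{b}, {a}∪S_π(a,b)}) = 0. -/
open Finset

variable {K : Type*} [Field K]

/-- The finite set `S_π(a,b) = { i : a < i ∧ π i < b }` (for a juggling function `π`,
it is contained in the open interval `(a,b)`). -/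
noncomputable def SFin (π : ℤ ≃ ℤ) (a b : ℤ) : Finset ℤ :=
  (Finset.Ioo a b).filter (fun i => π i < b)

/-! ### Auxiliary lemmas -/

lemma JugAux.sign_eq_signAux' {k : ℕ} (τ : Equiv.Perm (Fin k)) :
    Equiv.Perm.sign τ = Equiv.Perm.signAux τ := by
  refine Equiv.Perm.swap_induction_on τ ?_ ?_
  · simp [Equiv.Perm.signAux_one]
  · intro f x y hxy ih
    rw [Equiv.Perm.signAux_mul, map_mul, Equiv.Perm.sign_swap hxy,
      Equiv.Perm.signAux_swap hxy, ih]

lemma JugAux.sign_eq_pow_inversions {k : ℕ} (τ : Equiv.Perm (Fin k)) :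
    Equiv.Perm.sign τ = (-1 : ℤˣ) ^
      (Finset.univ.sigma fun j : Fin k =>
        Finset.univ.filter fun j' => j < j' ∧ τ j' < τ j).card := by
  rw [JugAux.sign_eq_signAux']
  unfold Equiv.Perm.signAux
  rw [← Finset.prod_filter_mul_prod_filter_not (Equiv.Perm.finPairsLT k)
    (fun x => τ x.1 ≤ τ x.2)]
  have h2 : ∏ x ∈ (Equiv.Perm.finPairsLT k).filter (fun x => ¬ τ x.1 ≤ τ x.2),
      (if τ x.1 ≤ τ x.2 then (-1 : ℤˣ) else 1) = 1 := by
    refine Finset.prod_eq_one fun x hx => ?_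
    rw [if_neg (mem_filter.mp hx).2]
  have h1 : ∏ x ∈ (Equiv.Perm.finPairsLT k).filter (fun x => τ x.1 ≤ τ x.2),
      (if τ x.1 ≤ τ x.2 then (-1 : ℤˣ) else 1)
      = (-1 : ℤˣ) ^ ((Equiv.Perm.finPairsLT k).filter (fun x => τ x.1 ≤ τ x.2)).card := by
    rw [← Finset.prod_const]
    refine Finset.prod_congr rfl fun x hx => ?_
    rw [if_pos (mem_filter.mp hx).2]
  rw [h1, h2, mul_one]
  congr 1
  refine Finset.card_bij (fun x _ => (⟨x.2, x.1⟩ : (_ : Fin k) × Fin k)) ?_ ?_ ?_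
  · rintro ⟨x1, x2⟩ hx
    simp only [mem_filter, Equiv.Perm.mem_finPairsLT] at hx
    simp only [mem_sigma, mem_univ, mem_filter, true_and]
    exact ⟨hx.1, lt_of_le_of_ne hx.2 fun h => (ne_of_gt hx.1) (τ.injective h)⟩
  · rintro ⟨x1, x2⟩ hx ⟨y1, y2⟩ hy h
    simp only [Sigma.mk.inj_iff, heq_eq_eq] at h ⊢
    exact ⟨h.2, h.1⟩
  · rintro ⟨j, j'⟩ hj
    simp only [mem_sigma, mem_univ, mem_filter, true_and] at hj
    refine ⟨⟨j', j⟩, ?_, rfl⟩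
    simp only [mem_filter, Equiv.Perm.mem_finPairsLT]
    exact ⟨hj.1, hj.2.le⟩

lemma JugAux.sign_mul_prod {k : ℕ} (τ : Equiv.Perm (Fin k)) :
    ((Equiv.Perm.sign τ : ℤ) : K) *
      ∏ j, (-1 : K) ^ ((Finset.univ.filter fun j' => j < j' ∧ τ j' < τ j).card) = 1 := by
  rw [Finset.prod_pow_eq_pow_sum]
  rw [show ∑ j, ((Finset.univ.filter fun j' => j < j' ∧ τ j' < τ j).card)
      = (Finset.univ.sigma fun j : Fin k =>
          Finset.univ.filter fun j' => j < j' ∧ τ j' < τ j).card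
    from (Finset.card_sigma _ _).symm]
  rw [JugAux.sign_eq_pow_inversions τ]
  set N := (Finset.univ.sigma fun j : Fin k =>
      Finset.univ.filter fun j' => j < j' ∧ τ j' < τ j).card
  have : ((((-1 : ℤˣ) ^ N : ℤˣ) : ℤ) : K) = (-1 : K) ^ N := by push_cast; ring
  rw [this, ← pow_add]
  exact Even.neg_one_pow ⟨N, by ring⟩

lemma JugAux.det_eq_of_le {m : ℕ} (M : Matrix (Fin m) (Fin m) K) (τ : Equiv.Perm (Fin m))
    (h : ∀ i j, M i j ≠ 0 → i ≤ τ j) :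
    M.det = ((Equiv.Perm.sign τ : ℤ) : K) * ∏ j, M (τ j) j := by
  rw [Matrix.det_apply']
  rw [Finset.sum_eq_single τ]
  · intro σ _ hστ
    rcases eq_or_ne (∏ i, M (σ i) i) 0 with h0 | h0
    · rw [h0, mul_zero]
    · exfalso
      apply hστ
      have hle : ∀ i, σ i ≤ τ i := fun i =>
        h (σ i) i (Finset.prod_ne_zero_iff.mp h0 i (mem_univ i))
      have hsum : ∑ i, ((σ i : ℕ)) = ∑ i, ((τ i : ℕ)) := by
        rw [Equiv.sum_comp σ (Fin.val ·), Equiv.sum_comp τ (Fin.val ·)]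
      have := (Finset.sum_eq_sum_iff_of_le (fun i _ => Fin.le_iff_val_le_val.mp (hle i))).mp hsum
      exact Equiv.ext fun i => Fin.ext (this i (mem_univ i))
  · intro h; exact absurd (mem_univ τ) h

lemma JugAux.minor_eq_det (C : ℤ → ℤ → K) {I J : Finset ℤ} {k : ℕ} (hI : I.card = k)
    (hJ : J.card = k) :
    minor C I J = Matrix.det (Matrix.of fun i j : Fin k =>
      C (I.orderEmbOfFin hI i) (J.orderEmbOfFin hJ j)) := by
  subst hI
  rw [minor, dif_pos hJ]

lemma JugAux.orderEmbOfFin_union_max {s : Finset ℤ} {x : ℤ} (hx : ∀ y ∈ s, y < x) {k : ℕ}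
    (hs : s.card = k) (hc : (s ∪ {x}).card = k + 1) :
    ⇑((s ∪ {x}).orderEmbOfFin hc) = Fin.snoc (⇑(s.orderEmbOfFin hs)) x := by
  refine (Finset.orderEmbOfFin_unique hc ?_ ?_).symm
  · intro i
    rcases Fin.eq_castSucc_or_eq_last i with ⟨j, rfl⟩ | rfl
    · rw [Fin.snoc_castSucc]; exact mem_union_left _ (orderEmbOfFin_mem _ _ _)
    · rw [Fin.snoc_last]; exact mem_union_right _ (mem_singleton_self x)
  · intro i j hij
    rcases Fin.eq_castSucc_or_eq_last j with ⟨j', rfl⟩ | rfl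
    · rcases Fin.eq_castSucc_or_eq_last i with ⟨i', rfl⟩ | rfl
      · rw [Fin.snoc_castSucc, Fin.snoc_castSucc]
        exact (s.orderEmbOfFin hs).strictMono (Fin.castSucc_lt_castSucc_iff.mp hij)
      · exact absurd hij (not_lt.2 (Fin.le_last _))
    · rcases Fin.eq_castSucc_or_eq_last i with ⟨i', rfl⟩ | rfl
      · rw [Fin.snoc_castSucc, Fin.snoc_last]
        exact hx _ (orderEmbOfFin_mem _ _ _)
      · exact absurd hij (lt_irrefl _)

lemma JugAux.orderEmbOfFin_union_min {s : Finset ℤ} {y : ℤ} (hy : ∀ c ∈ s, y < c) {k : ℕ}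
    (hs : s.card = k) (hc : ({y} ∪ s).card = k + 1) :
    ⇑(({y} ∪ s).orderEmbOfFin hc) = Fin.cons y (⇑(s.orderEmbOfFin hs)) := by
  refine (Finset.orderEmbOfFin_unique hc ?_ ?_).symm
  · intro i
    rcases Fin.eq_zero_or_eq_succ i with rfl | ⟨j, rfl⟩
    · rw [Fin.cons_zero]; exact mem_union_left _ (mem_singleton_self y)
    · rw [Fin.cons_succ]; exact mem_union_right _ (orderEmbOfFin_mem _ _ _)
  · intro i j hij
    rcases Fin.eq_zero_or_eq_succ j with rfl | ⟨j', rfl⟩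
    · exact absurd hij (Fin.not_lt_zero _)
    · rcases Fin.eq_zero_or_eq_succ i with rfl | ⟨i', rfl⟩
      · rw [Fin.cons_zero, Fin.cons_succ]; exact hy _ (orderEmbOfFin_mem _ _ _)
      · rw [Fin.cons_succ, Fin.cons_succ]
        exact (s.orderEmbOfFin hs).strictMono (Fin.succ_lt_succ_iff.mp hij)

lemma JugAux.exists_perm (π : ℤ ≃ ℤ) (S : Finset ℤ) {k : ℕ} (hS : S.card = k)
    (hI : (S.image π).card = k) :
    ∃ τ : Equiv.Perm (Fin k),
      ∀ j, (S.image π).orderEmbOfFin hI (τ j) = π (S.orderEmbOfFin hS j) := by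
  have hmem : ∀ j : Fin k, π (S.orderEmbOfFin hS j) ∈ S.image π :=
    fun j => mem_image_of_mem π (orderEmbOfFin_mem _ _ _)
  set F := (S.image π).orderIsoOfFin hI with hF
  let g : Fin k → Fin k := fun j => F.symm ⟨π (S.orderEmbOfFin hS j), hmem j⟩
  have hg : ∀ j, ((S.image π).orderEmbOfFin hI) (g j) = π (S.orderEmbOfFin hS j) := by
    intro j
    rw [← Finset.coe_orderIsoOfFin_apply]
    show ((F (F.symm _) : ℤ)) = _
    rw [OrderIso.apply_symm_apply]
  have hginj : Function.Injective g := by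
    intro j j' h
    have h2 := congrArg ((S.image π).orderEmbOfFin hI) h
    rw [hg, hg] at h2
    exact (S.orderEmbOfFin hS).injective (π.injective h2)
  exact ⟨Equiv.ofBijective g (Finite.injective_iff_bijective.mp hginj), fun j => by
    rw [Equiv.ofBijective_apply]; exact hg j⟩

lemma JugAux.mem_SFin {n : ℕ} {π : ℤ ≃ ℤ} (hπ : IsJuggling n π) {a b i : ℤ} :
    i ∈ SFin π a b ↔ a < i ∧ π i < b := by
  simp only [SFin, mem_filter, mem_Ioo]
  exact ⟨fun h => ⟨h.1.1, h.2⟩,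
    fun h => ⟨⟨h.1, lt_of_le_of_lt (hπ.le_self i) h.2⟩, h.2⟩⟩

lemma JugAux.minor_image_eq_one {π : ℤ ≃ ℤ} (C : ℤ → ℤ → K)
    (hzero : ∀ a b : ℤ, (¬(b ≤ a ∧ a ≤ π b) ∨ ¬(π.symm a ≤ b ∧ b ≤ a)) → C a b = 0)
    (hval : ∀ b : ℤ, C (π b) b = (-1 : K) ^ Set.ncard {i : ℤ | b < i ∧ π i < π b})
    (S : Finset ℤ) (hS : ∀ c ∈ S, ∀ i : ℤ, c < i → π i < π c → i ∈ S) :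
    minor C (S.image π) S = 1 := by
  have hI : (S.image π).card = S.card := card_image_of_injective S π.injective
  rw [JugAux.minor_eq_det C hI rfl]
  obtain ⟨τ, hτ⟩ := JugAux.exists_perm π S rfl hI
  set Q := S.orderEmbOfFin rfl with hQdef
  set R := (S.image π).orderEmbOfFin hI with hRdef
  set M : Matrix (Fin S.card) (Fin S.card) K :=
    Matrix.of fun i j => C (R i) (Q j) with hM
  have key : ∀ i j, M i j ≠ 0 → i ≤ τ j := by
    intro i j hne
    have h4 : ¬(¬(Q j ≤ R i ∧ R i ≤ π (Q j)) ∨ ¬(π.symm (R i) ≤ Q j ∧ Q j ≤ R i)) :=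
      fun h => hne (hzero _ _ h)
    push_neg at h4
    have hle : R i ≤ π (Q j) := h4.1.2
    rw [← hτ j] at hle
    exact R.le_iff_le.mp hle
  rw [JugAux.det_eq_of_le M τ key]
  have hprod : ∀ j : Fin S.card, M (τ j) j
      = (-1 : K) ^ ((Finset.univ.filter fun j' => j < j' ∧ τ j' < τ j).card) := by
    intro j
    show C (R (τ j)) (Q j) = _
    rw [hτ j, hval (Q j)]
    congr 1
    have hset : {i : ℤ | Q j < i ∧ π i < π (Q j)}
        = ↑((Finset.univ.filter fun j' => j < j' ∧ τ j' < τ j).image Q) := by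
      ext i
      simp only [Set.mem_setOf_eq, coe_image, Set.mem_image, mem_coe, mem_filter,
        mem_univ, true_and]
      constructor
      · rintro ⟨h1, h2⟩
        have hiS : i ∈ S := hS (Q j) (orderEmbOfFin_mem _ _ _) i h1 h2
        have : i ∈ Set.range Q := by rw [Finset.range_orderEmbOfFin]; exact_mod_cast hiS
        obtain ⟨j', rfl⟩ := this
        refine ⟨j', ⟨Q.lt_iff_lt.mp h1, ?_⟩, rfl⟩
        rw [← hτ j, ← hτ j'] at h2
        exact R.lt_iff_lt.mp h2
      · rintro ⟨j', ⟨hjj', hττ⟩, rfl⟩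
        refine ⟨Q.lt_iff_lt.mpr hjj', ?_⟩
        rw [← hτ j, ← hτ j']
        exact R.lt_iff_lt.mpr hττ
    rw [hset, Set.ncard_coe_finset, card_image_of_injective _ Q.injective]
  rw [Finset.prod_congr rfl (fun j _ => hprod j)]
  exact JugAux.sign_mul_prod τ

lemma JugAux.border_cards (π : ℤ ≃ ℤ) (S : Finset ℤ) (a b : ℤ)
    (ha : ∀ c ∈ S, a < c) (hb : ∀ c ∈ S, π c < b) :
    (S.image π ∪ {b}).card = S.card + 1 ∧ ({a} ∪ S).card = S.card + 1 ∧
    (∀ y ∈ S.image π, y < b) := by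
  have hπb : ∀ y ∈ S.image π, y < b := by
    intro y hy
    obtain ⟨c, hc, rfl⟩ := mem_image.mp hy
    exact hb c hc
  have hbI : b ∉ S.image π := fun h => lt_irrefl b (hπb b h)
  have haS : a ∉ S := fun h => lt_irrefl a (ha a h)
  refine ⟨?_, ?_, hπb⟩
  · rw [union_comm, ← insert_eq, card_insert_of_notMem hbI,
      card_image_of_injective S π.injective]
  · rw [← insert_eq, card_insert_of_notMem haS]

lemma JugAux.minor_border_eq_zero (π : ℤ ≃ ℤ) (C : ℤ → ℤ → K) (S : Finset ℤ) (a b : ℤ)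
    (hzero : ∀ a b : ℤ, (¬(b ≤ a ∧ a ≤ π b) ∨ ¬(π.symm a ≤ b ∧ b ≤ a)) → C a b = 0)
    (ha : ∀ c ∈ S, a < c) (hb : ∀ c ∈ S, π c < b) (hCba : C b a = 0) :
    minor C (S.image π ∪ {b}) ({a} ∪ S) = 0 := by
  obtain ⟨hI, hJ, hπb⟩ := JugAux.border_cards π S a b ha hb
  have hRcard : (S.image π).card = S.card := card_image_of_injective S π.injective
  rw [JugAux.minor_eq_det C hI hJ]
  obtain ⟨τ, hτ⟩ := JugAux.exists_perm π S rfl hRcard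
  set Q := S.orderEmbOfFin rfl with hQdef
  set R := (S.image π).orderEmbOfFin hRcard with hRdef
  set R' := (S.image π ∪ {b}).orderEmbOfFin hI with hR'def
  set Q' := ({a} ∪ S).orderEmbOfFin hJ with hQ'def
  have hR' : ⇑R' = Fin.snoc (⇑R) b := JugAux.orderEmbOfFin_union_max hπb hRcard hI
  have hQ' : ⇑Q' = Fin.cons a (⇑Q) := JugAux.orderEmbOfFin_union_min ha rfl hJ
  set g' : Fin (S.card + 1) → Fin (S.card + 1) :=
    Fin.cons (Fin.last S.card) (fun j => (τ j).castSucc) with hg'def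
  have hg'inj : Function.Injective g' := by
    intro i j h
    rcases Fin.eq_zero_or_eq_succ i with rfl | ⟨i', rfl⟩ <;>
      rcases Fin.eq_zero_or_eq_succ j with rfl | ⟨j', rfl⟩
    · rfl
    · rw [hg'def] at h
      simp only [Fin.cons_zero, Fin.cons_succ] at h
      exact absurd h.symm (Fin.castSucc_lt_last (τ j')).ne
    · rw [hg'def] at h
      simp only [Fin.cons_zero, Fin.cons_succ] at h
      exact absurd h (Fin.castSucc_lt_last (τ i')).ne
    · rw [hg'def] at h
      simp only [Fin.cons_succ] at h
      rw [τ.injective (Fin.castSucc_injective _ h)]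
  set τ' : Equiv.Perm (Fin (S.card + 1)) :=
    Equiv.ofBijective g' (Finite.injective_iff_bijective.mp hg'inj) with hτ'def
  have hτ'0 : τ' 0 = Fin.last S.card := by
    rw [hτ'def, Equiv.ofBijective_apply, hg'def, Fin.cons_zero]
  have hτ's : ∀ j, τ' j.succ = (τ j).castSucc := by
    intro j
    rw [hτ'def, Equiv.ofBijective_apply, hg'def, Fin.cons_succ]
  set M : Matrix (Fin (S.card + 1)) (Fin (S.card + 1)) K :=
    Matrix.of fun i j => C (R' i) (Q' j) with hM
  have key : ∀ i j, M i j ≠ 0 → i ≤ τ' j := by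
    intro i j hne
    rcases Fin.eq_zero_or_eq_succ j with rfl | ⟨j0, rfl⟩
    · rw [hτ'0]; exact Fin.le_last i
    · have h4 : ¬(¬(Q' j0.succ ≤ R' i ∧ R' i ≤ π (Q' j0.succ)) ∨
          ¬(π.symm (R' i) ≤ Q' j0.succ ∧ Q' j0.succ ≤ R' i)) :=
        fun h => hne (hzero _ _ h)
      push_neg at h4
      have hle : R' i ≤ π (Q' j0.succ) := h4.1.2
      have hQv : Q' j0.succ = Q j0 := by rw [hQ', Fin.cons_succ]
      have hRv : π (Q j0) = R' ((τ j0).castSucc) := by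
        rw [hR', Fin.snoc_castSucc, hτ j0]
      rw [hQv, hRv] at hle
      rw [hτ's j0]
      exact R'.le_iff_le.mp hle
  rw [JugAux.det_eq_of_le M τ' key]
  apply mul_eq_zero_of_right
  apply Finset.prod_eq_zero (mem_univ (0 : Fin (S.card + 1)))
  show C (R' (τ' 0)) (Q' 0) = 0
  rw [hτ'0, hR', hQ', Fin.snoc_last, Fin.cons_zero]
  exact hCba

lemma JugAux.minor_border_eval (π : ℤ ≃ ℤ) (C : ℤ → ℤ → K) (S : Finset ℤ) (a b : ℤ)
    (ha : ∀ c ∈ S, a < c) (hb : ∀ c ∈ S, π c < b)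
    (hcol : ∀ c ∈ S, C (π c) a = 0) :
    minor C (S.image π ∪ {b}) ({a} ∪ S)
      = (-1 : K) ^ S.card * C b a * minor C (S.image π) S := by
  obtain ⟨hI, hJ, hπb⟩ := JugAux.border_cards π S a b ha hb
  have hRcard : (S.image π).card = S.card := card_image_of_injective S π.injective
  rw [JugAux.minor_eq_det C hI hJ, JugAux.minor_eq_det C hRcard rfl]
  set Q := S.orderEmbOfFin rfl with hQdef
  set R := (S.image π).orderEmbOfFin hRcard with hRdef
  set R' := (S.image π ∪ {b}).orderEmbOfFin hI with hR'def
  set Q' := ({a} ∪ S).orderEmbOfFin hJ with hQ'def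
  have hR' : ⇑R' = Fin.snoc (⇑R) b := JugAux.orderEmbOfFin_union_max hπb hRcard hI
  have hQ' : ⇑Q' = Fin.cons a (⇑Q) := JugAux.orderEmbOfFin_union_min ha rfl hJ
  set M : Matrix (Fin (S.card + 1)) (Fin (S.card + 1)) K :=
    Matrix.of fun i j => C (R' i) (Q' j) with hM
  show M.det = _
  rw [Matrix.det_succ_column_zero]
  rw [Finset.sum_eq_single (Fin.last S.card)]
  · have h00 : M (Fin.last S.card) 0 = C b a := by
      show C (R' (Fin.last S.card)) (Q' 0) = C b a
      rw [hR', hQ', Fin.snoc_last, Fin.cons_zero]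
    have hsub : (M.submatrix (Fin.last S.card).succAbove Fin.succ)
        = Matrix.of fun i j : Fin S.card => C (R i) (Q j) := by
      ext i j
      show M ((Fin.last S.card).succAbove i) (j.succ) = C (R i) (Q j)
      rw [Fin.succAbove_last]
      show C (R' i.castSucc) (Q' j.succ) = _
      rw [hR', hQ', Fin.snoc_castSucc, Fin.cons_succ]
    rw [h00, hsub, Fin.val_last]
  · intro i _ hne
    rcases Fin.eq_castSucc_or_eq_last i with ⟨i', rfl⟩ | rfl
    · have : M i'.castSucc 0 = 0 := by
        show C (R' i'.castSucc) (Q' 0) = 0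
        rw [hR', hQ', Fin.snoc_castSucc, Fin.cons_zero]
        have : R i' ∈ S.image π := orderEmbOfFin_mem _ _ _
        obtain ⟨c, hc, hRc⟩ := mem_image.mp this
        rw [← hRc]
        exact hcol c hc
      rw [this, mul_zero, zero_mul]
    · exact absurd rfl hne
  · intro h; exact absurd (mem_univ _) h

/-- **Minor characterization of `π`-prefriezes.** A lower unitriangular `ℤ×ℤ` matrix
`C` is a `π`-prefrieze iff (1) `det(C_{π(S_π(a,b)), S_π(a,b)}) = 1` for all `a < b`,
and (2) `det(C_{π(S_π(a,b)) ∪ {b}, {a} ∪ S_π(a,b)}) = 0` for all `a < b` with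
`a < π⁻¹ b` or `π a < b`. -/
theorem prefrieze_iff_minors (n : ℕ) (π : ℤ ≃ ℤ) (hπ : IsJuggling n π)
    (C : ℤ → ℤ → K) (htri : ∀ a b : ℤ, a < b → C a b = 0)
    (hdiag : ∀ a : ℤ, C a a = 1) :
    IsPrefrieze π C ↔
      ((∀ a b : ℤ, a < b →
          minor C ((SFin π a b).image π) (SFin π a b) = 1) ∧
       (∀ a b : ℤ, a < b → (a < π.symm b ∨ π a < b) →
          minor C ((SFin π a b).image π ∪ {b}) ({a} ∪ SFin π a b) = 0)) := by
  constructor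
  · intro hP
    have hzero : ∀ a b : ℤ, (¬(b ≤ a ∧ a ≤ π b) ∨ ¬(π.symm a ≤ b ∧ b ≤ a)) → C a b = 0 :=
      fun a b => (hP a b).2.2
    have hval : ∀ b : ℤ, C (π b) b = (-1 : K) ^ Set.ncard {i : ℤ | b < i ∧ π i < π b} :=
      fun b => (hP (π b) b).2.1 rfl
    constructor
    · intro a b _
      refine JugAux.minor_image_eq_one C hzero hval _ ?_
      intro c hc i hci hπi
      rw [JugAux.mem_SFin hπ] at hc ⊢
      exact ⟨hc.1.trans hci, hπi.trans hc.2⟩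
    · intro a b _ hcond
      refine JugAux.minor_border_eq_zero π C _ a b hzero ?_ ?_ ?_
      · intro c hc; exact ((JugAux.mem_SFin hπ).mp hc).1
      · intro c hc; exact ((JugAux.mem_SFin hπ).mp hc).2
      · rcases hcond with h | h
        · exact hzero b a (Or.inr fun hc => absurd hc.1 (not_le.2 h))
        · exact hzero b a (Or.inl fun hc => absurd hc.2 (not_le.2 h))
  · rintro ⟨h1, h2⟩
    have hsymm_le : ∀ x : ℤ, π.symm x ≤ x := fun x => by
      have := hπ.le_self (π.symm x); rwa [Equiv.apply_symm_apply] at this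
    have hZ : ∀ d : ℕ, ∀ x y : ℤ, y ≤ x → (x - y).toNat ≤ d →
        (π y < x ∨ y < π.symm x) → C x y = 0 := by
      intro d
      induction d with
      | zero =>
        intro x y hyx hd hcond
        have hxy : x = y := by omega
        subst hxy
        rcases hcond with h | h
        · exact absurd h (not_lt.2 (hπ.le_self x))
        · exact absurd h (not_lt.2 (hsymm_le x))
      | succ d ih =>
        intro x y hyx hd hcond
        rcases eq_or_lt_of_le hyx with heq | hlt
        · subst heq
          rcases hcond with h | h
          · exact absurd h (not_lt.2 (hπ.le_self y))
          · exact absurd h (not_lt.2 (hsymm_le y))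
        · have key := h2 y x hlt hcond.symm
          have ha : ∀ c ∈ SFin π y x, y < c := fun c hc => ((JugAux.mem_SFin hπ).mp hc).1
          have hb : ∀ c ∈ SFin π y x, π c < x := fun c hc => ((JugAux.mem_SFin hπ).mp hc).2
          have hcol : ∀ c ∈ SFin π y x, C (π c) y = 0 := by
            intro c hc
            obtain ⟨hyc, hcx⟩ := (JugAux.mem_SFin hπ).mp hc
            have hcpc := hπ.le_self c
            refine ih (π c) y (by linarith) ?_ (Or.inr ?_)
            · set p := π c with hp
              omega
            · rw [Equiv.symm_apply_apply]; exact hyc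
          have heval := JugAux.minor_border_eval π C (SFin π y x) y x ha hb hcol
          rw [key, h1 y x hlt, mul_one] at heval
          rcases mul_eq_zero.mp heval.symm with h0 | h0
          · exact absurd h0 (pow_ne_zero _ (neg_ne_zero.2 one_ne_zero))
          · exact h0
    have hZ' : ∀ x y : ℤ, y ≤ x → (π y < x ∨ y < π.symm x) → C x y = 0 :=
      fun x y h hc => hZ (x - y).toNat x y h le_rfl hc
    have hV : ∀ y : ℤ, C (π y) y = (-1 : K) ^ (SFin π y (π y)).card := by
      intro y
      rcases eq_or_lt_of_le (hπ.le_self y) with heq | hlt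
      · rw [← heq, hdiag]
        have hS0 : SFin π y y = ∅ := by simp [SFin]
        rw [hS0, card_empty, pow_zero]
      · have hT : SFin π (y - 1) (π y + 1) = {y} ∪ SFin π y (π y) := by
          ext i
          rw [JugAux.mem_SFin hπ, mem_union, mem_singleton, JugAux.mem_SFin hπ]
          constructor
          · rintro ⟨hi1, hi2⟩
            rcases eq_or_lt_of_le (by linarith : y ≤ i) with heq2 | hlt2
            · exact Or.inl heq2.symm
            · refine Or.inr ⟨hlt2, ?_⟩
              have hne : π i ≠ π y := fun h => hlt2.ne' (π.injective h)
              exact lt_of_le_of_ne (by linarith) hne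
          · rintro (rfl | ⟨hi1, hi2⟩)
            · exact ⟨by linarith, by linarith⟩
            · exact ⟨by linarith, by linarith⟩
        have hTim : (SFin π (y - 1) (π y + 1)).image π
            = (SFin π y (π y)).image π ∪ {π y} := by
          rw [hT, image_union, image_singleton, union_comm]
        have h1' := h1 (y - 1) (π y + 1) (by linarith)
        rw [hTim, hT] at h1'
        have ha : ∀ c ∈ SFin π y (π y), y < c := fun c hc => ((JugAux.mem_SFin hπ).mp hc).1
        have hb : ∀ c ∈ SFin π y (π y), π c < π y := fun c hc => ((JugAux.mem_SFin hπ).mp hc).2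
        have hcol : ∀ c ∈ SFin π y (π y), C (π c) y = 0 := by
          intro c hc
          obtain ⟨hyc, _⟩ := (JugAux.mem_SFin hπ).mp hc
          exact hZ' (π c) y (le_trans hyc.le (hπ.le_self c))
            (Or.inr (by rw [Equiv.symm_apply_apply]; exact hyc))
        have heval := JugAux.minor_border_eval π C (SFin π y (π y)) y (π y) ha hb hcol
        rw [h1', h1 y (π y) hlt, mul_one] at heval
        set k := (SFin π y (π y)).card with hk
        have h2k : ((-1 : K) ^ k) * ((-1 : K) ^ k) = 1 := by
          rw [← pow_add]; exact Even.neg_one_pow ⟨k, by ring⟩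
        calc C (π y) y = ((-1 : K) ^ k * (-1 : K) ^ k) * C (π y) y := by rw [h2k, one_mul]
          _ = (-1 : K) ^ k * ((-1 : K) ^ k * C (π y) y) := by ring
          _ = (-1 : K) ^ k := by rw [← heval, mul_one]
    intro a b
    refine ⟨fun h => by rw [h]; exact hdiag b, fun h => ?_, fun h => ?_⟩
    · subst h
      rw [hV b]
      congr 1
      have hset : {i : ℤ | b < i ∧ π i < π b} = ↑(SFin π b (π b)) := by
        ext i
        rw [Set.mem_setOf_eq, mem_coe, JugAux.mem_SFin hπ]
      rw [hset, Set.ncard_coe_finset]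
    · rcases le_or_gt b a with hba | hba
      · refine hZ' a b hba ?_
        rcases h with h | h
        · push_neg at h
          exact Or.inl (h hba)
        · push_neg at h
          exact Or.inr (not_le.mp fun hc => absurd (h hc) (not_lt.2 hba))
      · exact htri a b hba
end
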